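/- arXiv:1206.6673 — 12 statements merged into one kernel-verified Lean document; each statement's English description precedes it below -/
import Mathlib

section
/- For all integers N ≥ 1 and l with 0 ≤ l ≤ N, one has (1/N) · Σ_{n=1}^{N-1} sin²(n l π/N) / sin²(n π/N) = l(N−l)/N. -/
open Real Finset

/-!
Let `S(l) = ∑ₙ sin²(nlπ/N) / sin²(nπ/N)` and put `x = nπ/N`. The identity
`sin²(a + x) + sin²(a - x) = 2 sin² a + 2 cos 2a · sin² x` at `a = (l+1)x`, divided by
`sin² x` and summed over `n`, gives the second difference
`S(l+2) - 2 S(l+1) + S(l) = 2 ∑ₙ cos(2π(l+1)n/N) = -2` as long as `l + 1 < N`, since the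
`N`-th roots of unity other than `1` sum to `-1`. With `S(0) = 0` and `S(1) = N - 1` this
forces `S(l) = l(N - l)` for `l ≤ N`.
-/

lemma sin_add_sq_add_sin_sub_sq (a x : ℝ) :
    sin (a + x) ^ 2 + sin (a - x) ^ 2 = 2 * sin a ^ 2 + 2 * cos (2 * a) * sin x ^ 2 := by
  rw [sin_add, sin_sub, cos_two_mul']
  linear_combination 2 * sin a ^ 2 * sin_sq_add_cos_sq x

lemma sin_natCast_mul_pi_div_ne_zero {N k : ℕ} (hN : N ≠ 0) (hk : ¬ N ∣ k) :
    sin (k * π / N) ≠ 0 := by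
  rw [Ne, sin_eq_zero_iff]
  rintro ⟨m, hm⟩
  have hkm : (k : ℝ) = m * N := by field_simp at hm; linarith
  exact hk (Int.natCast_dvd_natCast.mp ⟨m, by rw [mul_comm]; exact_mod_cast hkm⟩)

lemma sin_sq_natCast_mul_pi_div_ne_zero_of_mem_Icc {N n : ℕ} (hn : n ∈ Icc 1 (N - 1)) :
    sin (n * π / N) ^ 2 ≠ 0 := by
  rw [mem_Icc] at hn
  exact pow_ne_zero 2
    (sin_natCast_mul_pi_div_ne_zero (by omega) (Nat.not_dvd_of_pos_of_lt hn.1 (by omega)))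

lemma sum_range_cos_two_pi_mul_div {N k : ℕ} (hN : N ≠ 0) (hk : ¬ N ∣ k) :
    ∑ n ∈ range N, cos (2 * π * k * n / N) = 0 := by
  have h := sin_mul_sum_cos N (2 * π * k / N) 0
  have hNk : (N : ℝ) * (2 * π * k / N) / 2 = k * π := by field_simp
  rw [hNk, sin_nat_mul_pi, zero_mul, show 2 * π * k / N / 2 = k * π / N by ring] at h
  simp only [add_zero, div_mul_eq_mul_div] at h
  exact (mul_eq_zero.mp h).resolve_left (sin_natCast_mul_pi_div_ne_zero hN hk)

lemma sum_Icc_cos_two_pi_mul_div {N k : ℕ} (hN : N ≠ 0) (hk : ¬ N ∣ k) :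
    ∑ n ∈ Icc 1 (N - 1), cos (2 * π * k * n / N) = -1 := by
  have h := sum_range_cos_two_pi_mul_div hN hk
  rw [range_eq_Ico, sum_eq_sum_Ico_succ_bot (Nat.pos_of_ne_zero hN)] at h
  rw [Icc_sub_one_right_eq_Ico_of_not_isMin (by simpa using hN)]
  simp only [Nat.cast_zero, mul_zero, zero_div, cos_zero] at h
  linarith

noncomputable def sumSinSqRatio (N l : ℕ) : ℝ :=
  ∑ n ∈ Icc 1 (N - 1), sin (n * l * π / N) ^ 2 / sin (n * π / N) ^ 2

lemma sumSinSqRatio_one {N : ℕ} (hN : 0 < N) : sumSinSqRatio N 1 = N - 1 := by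
  rw [sumSinSqRatio, sum_congr rfl fun n hn => by
    rw [Nat.cast_one, mul_one, div_self (sin_sq_natCast_mul_pi_div_ne_zero_of_mem_Icc hn)]]
  simp [Nat.cast_sub hN]

lemma sumSinSqRatio_add_two {N l : ℕ} (hl : l + 2 ≤ N) :
    sumSinSqRatio N (l + 2) + sumSinSqRatio N l = 2 * sumSinSqRatio N (l + 1) - 2 := by
  have step : ∀ n ∈ Icc 1 (N - 1),
      sin (n * (l + 2 : ℕ) * π / N) ^ 2 / sin (n * π / N) ^ 2
        + sin (n * l * π / N) ^ 2 / sin (n * π / N) ^ 2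
      = 2 * (sin (n * (l + 1 : ℕ) * π / N) ^ 2 / sin (n * π / N) ^ 2)
        + 2 * cos (2 * π * (l + 1 : ℕ) * n / N) := by
    intro n hn
    have h := sin_add_sq_add_sin_sub_sq ((l + 1) * (n * π / N)) (n * π / N)
    rw [show (l + 1) * (n * π / N) + n * π / N = n * (l + 2 : ℕ) * π / N by push_cast; ring,
      show (l + 1) * (n * π / N) - n * π / N = n * l * π / N by ring,
      show 2 * ((l + 1) * (n * π / N)) = 2 * π * (l + 1 : ℕ) * n / N by push_cast; ring,
      show (l + 1) * (n * π / N) = n * (l + 1 : ℕ) * π / N by push_cast; ring] at h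
    rw [← add_div, h, add_div,
      mul_div_cancel_right₀ _ (sin_sq_natCast_mul_pi_div_ne_zero_of_mem_Icc hn), mul_div_assoc]
  rw [sumSinSqRatio, sumSinSqRatio, sumSinSqRatio, ← sum_add_distrib, sum_congr rfl step,
    sum_add_distrib, ← mul_sum, ← mul_sum,
    sum_Icc_cos_two_pi_mul_div (by omega) (Nat.not_dvd_of_pos_of_lt l.succ_pos (by omega))]
  ring

theorem sumSinSqRatio_eq {N l : ℕ} (hl : l ≤ N) : sumSinSqRatio N l = l * (N - l) := by
  induction l using Nat.twoStepInduction with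
  | zero => simp [sumSinSqRatio]
  | one => rw [sumSinSqRatio_one hl]; push_cast; ring
  | more l ih₀ ih₁ =>
    have h := sumSinSqRatio_add_two hl
    rw [ih₀ (by omega), ih₁ (by omega)] at h
    push_cast at h ⊢
    linarith

theorem cycle_two_point_resistance_general (N l : ℕ) (hl : l ≤ N) :
    (1 / (N : ℝ)) * ∑ n ∈ Finset.Icc 1 (N - 1),
      (Real.sin (n * l * Real.pi / N)) ^ 2 / (Real.sin (n * Real.pi / N)) ^ 2
    = (l : ℝ) * ((N : ℝ) - l) / N := by
  rw [← sumSinSqRatio, sumSinSqRatio_eq hl, one_div_mul_eq_div]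

theorem cycle_two_point_resistance (N l : ℕ) (hN : 1 ≤ N) (hl : l ≤ N) :
    (1 / (N : ℝ)) * ∑ n ∈ Finset.Icc 1 (N - 1),
      (Real.sin (n * l * Real.pi / N)) ^ 2 / (Real.sin (n * Real.pi / N)) ^ 2
    = (l : ℝ) * ((N : ℝ) - l) / N :=
  cycle_two_point_resistance_general N l hl
end

section
/- For all integers N ≥ 1 and l with 0 ≤ l ≤ N, one has (1/N) · Σ_{n=1}^{N-1} (1 − cos(n l π/N)) / (1 − cos(n π/N)) = l − (1/N)·( l²/2 + (1 − (−1)^l)/4 ). -/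
open Real Finset

/-!
Write `S l` for `N` times the left-hand side. Since `cos ((l + 2) θ) + cos (l θ) = 2 cos θ cos ((l + 1) θ)`,
the second difference `S (l + 2) - 2 S (l + 1) + S l` is `2 ∑ₙ cos (n (l + 1) π / N)`, and for `0 < m < 2N`
the sum `∑_{n=1}^{N-1} cos (n m π / N)` telescopes, after multiplication by `2 sin (m π / 2N)`, to
`-(1 + (-1)^m) / 2`. So `S` and `N l - l² / 2 - (1 - (-1)^l) / 4` satisfy the same recurrence for `l ≤ N`,
with the same values `0` and `N - 1` at `l = 0, 1`.
-/

theorem two_mul_sin_half_mul_sum_Icc_cos (φ : ℝ) (k : ℕ) :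
    2 * sin (φ / 2) * ∑ n ∈ Icc 1 k, cos (n * φ) = sin ((k + 1 / 2) * φ) - sin (φ / 2) := by
  induction k with
  | zero => simp [one_div, inv_mul_eq_div]
  | succ k ih =>
    rw [sum_Icc_succ_top (by omega), mul_add, ih]
    have h := sin_sub_sin (((k + 1 : ℕ) + 1 / 2) * φ) ((k + 1 / 2) * φ)
    push_cast at h ⊢
    rw [show ((k + 1 + 1 / 2) * φ - (k + 1 / 2) * φ) / 2 = φ / 2 by ring,
      show ((k + 1 + 1 / 2) * φ + (k + 1 / 2) * φ) / 2 = (k + 1) * φ by ring] at h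
    linear_combination -h

theorem nat_mul_pi_div_lt_two_pi {N m : ℕ} (hmN : m < 2 * N) : (m : ℝ) * π / N < 2 * π := by
  have hN : (0 : ℝ) < N := by exact_mod_cast (show 0 < N by omega)
  have hmN' : (m : ℝ) < 2 * N := by exact_mod_cast hmN
  rw [div_lt_iff₀ hN]
  nlinarith [pi_pos]

theorem sum_Icc_cos_nat_mul_pi_div {N m : ℕ} (hm : 0 < m) (hmN : m < 2 * N) :
    ∑ n ∈ Icc 1 (N - 1), cos (n * m * π / N) = -(1 + (-1) ^ m) / 2 := by
  have hN : (0 : ℝ) < N := by exact_mod_cast (show 0 < N by omega)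
  set φ : ℝ := m * π / N with hφ
  have hsin : 0 < sin (φ / 2) :=
    sin_pos_of_pos_of_lt_pi (by positivity) (by linarith [nat_mul_pi_div_lt_two_pi hmN])
  have hend : ((N - 1 : ℕ) + 1 / 2) * φ = m * π - φ / 2 := by
    rw [Nat.cast_sub (by omega), hφ]
    field_simp
    ring
  have htel := two_mul_sin_half_mul_sum_Icc_cos φ (N - 1)
  rw [hend, sin_nat_mul_pi_sub] at htel
  have hsum : ∑ n ∈ Icc 1 (N - 1), cos (n * m * π / N) = ∑ n ∈ Icc 1 (N - 1), cos (n * φ) :=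
    sum_congr rfl fun n _ => by rw [hφ, mul_div_assoc', ← mul_assoc]
  rw [hsum]
  apply mul_left_cancel₀ (mul_pos two_pos hsin).ne'
  linear_combination htel

theorem cos_nat_mul_pi_div_ne_one {N n : ℕ} (hn : 0 < n) (hnN : n < 2 * N) :
    cos (n * π / N) ≠ 1 := by
  rw [Ne, cos_eq_one_iff_of_lt_of_lt (by linarith [pi_pos, show 0 ≤ (n : ℝ) * π / N by positivity])
    (nat_mul_pi_div_lt_two_pi hnN)]
  have hN : 0 < N := by omega
  positivity

theorem one_sub_cos_ne_zero_of_mem_Icc {N n : ℕ} (hn : n ∈ Icc 1 (N - 1)) :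
    1 - cos (n * π / N) ≠ 0 := by
  obtain ⟨hn1, hnN⟩ := mem_Icc.mp hn
  exact sub_ne_zero.mpr (cos_nat_mul_pi_div_ne_one hn1 (by omega)).symm

theorem one_sub_cos_nat_add_two_mul (θ : ℝ) (l : ℕ) :
    1 - cos ((l + 2) * θ) =
      2 * (1 - cos ((l + 1) * θ)) - (1 - cos (l * θ)) + 2 * cos ((l + 1) * θ) * (1 - cos θ) := by
  have h := cos_add_cos ((l + 2) * θ) (l * θ)
  rw [show ((l + 2) * θ + l * θ) / 2 = (l + 1) * θ by ring,
    show ((l + 2) * θ - l * θ) / 2 = θ by ring] at h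
  linear_combination -h

noncomputable def pathResistanceSum (N l : ℕ) : ℝ :=
  ∑ n ∈ Icc 1 (N - 1), (1 - cos (n * l * π / N)) / (1 - cos (n * π / N))

theorem pathResistanceSum_zero (N : ℕ) : pathResistanceSum N 0 = 0 := by
  simp [pathResistanceSum]

theorem pathResistanceSum_one {N : ℕ} (hN : 1 ≤ N) : pathResistanceSum N 1 = N - 1 := by
  simp only [pathResistanceSum, Nat.cast_one, mul_one]
  rw [sum_congr rfl fun n hn => div_self (one_sub_cos_ne_zero_of_mem_Icc hn)]
  simp [Nat.cast_sub hN]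

theorem pathResistanceSum_add_two (N l : ℕ) :
    pathResistanceSum N (l + 2) = 2 * pathResistanceSum N (l + 1) - pathResistanceSum N l
      + 2 * ∑ n ∈ Icc 1 (N - 1), cos (n * (l + 1 : ℕ) * π / N) := by
  simp only [pathResistanceSum, mul_sum, ← sum_sub_distrib, ← sum_add_distrib]
  refine sum_congr rfl fun n hn => ?_
  have hden := one_sub_cos_ne_zero_of_mem_Icc hn
  have h := one_sub_cos_nat_add_two_mul (n * π / N) l
  push_cast
  field_simp
  ring_nf at h ⊢
  linear_combination h

theorem pathResistanceSum_eq {N l : ℕ} (hl : l ≤ N) :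
    pathResistanceSum N l = N * l - (l ^ 2 / 2 + (1 - (-1) ^ l) / 4) := by
  induction l using Nat.twoStepInduction with
  | zero => simp [pathResistanceSum_zero]
  | one => rw [pathResistanceSum_one hl]; ring
  | more l ih₀ ih₁ =>
    rw [pathResistanceSum_add_two, ih₀ (by omega), ih₁ (by omega),
      sum_Icc_cos_nat_mul_pi_div (by omega) (by omega)]
    push_cast
    ring

theorem path_graph_two_point_resistance_general (N l : ℕ) (hl : l ≤ N) :
    (1 / (N : ℝ)) * ∑ n ∈ Finset.Icc 1 (N - 1),
      (1 - Real.cos (n * l * Real.pi / N)) / (1 - Real.cos (n * Real.pi / N))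
    = (l : ℝ) - (1 / (N : ℝ)) * ((l : ℝ) ^ 2 / 2 + (1 - (-1 : ℝ) ^ l) / 4) := by
  obtain rfl | hN₀ := eq_or_ne N 0
  · simp [Nat.le_zero.mp hl]
  rw [← pathResistanceSum, pathResistanceSum_eq hl]
  field_simp

theorem path_graph_two_point_resistance (N l : ℕ) (hN : 1 ≤ N) (hl : l ≤ N) :
    (1 / (N : ℝ)) * ∑ n ∈ Finset.Icc 1 (N - 1),
      (1 - Real.cos (n * l * Real.pi / N)) / (1 - Real.cos (n * Real.pi / N))
    = (l : ℝ) - (1 / (N : ℝ)) * ((l : ℝ) ^ 2 / 2 + (1 - (-1 : ℝ) ^ l) / 4) :=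
  path_graph_two_point_resistance_general N l hl
end

section
/- Let N be a positive even integer and let l be an integer with 0 ≤ l ≤ N. Then (1/N) · Σ_{n=1}^{N/2} (1 − cos((2n−1) l π/N)) / (1 − cos((2n−1) π/N)) = l/2. -/
open Real Finset

/-!
Put `θₙ = (2n - 1)π / N` and `S l = ∑ₙ (1 - cos (l θₙ)) / (1 - cos θₙ)`. From
`cos ((l + 2)θ) + cos (lθ) = 2 cos ((l + 1)θ) cos θ` one gets
`S (l + 2) = 2 S (l + 1) - S l + 2 ∑ₙ cos ((l + 1) θₙ)`, and the last sum vanishes for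
`0 < l + 1 < N` because, multiplied by `2 sin ((l + 1)π / N)`, it telescopes to `sin ((l + 1)π) = 0`.
Hence `S` is linear on `[0, N]`, with `S 0 = 0` and `S 1 = N / 2`.
-/

theorem one_sub_cos_add_two_mul_div {θ : ℝ} (hθ : cos θ ≠ 1) (m : ℝ) :
    (1 - cos ((m + 2) * θ)) / (1 - cos θ)
      = 2 * ((1 - cos ((m + 1) * θ)) / (1 - cos θ)) - (1 - cos (m * θ)) / (1 - cos θ)
        + 2 * cos ((m + 1) * θ) := by
  have hd : 1 - cos θ ≠ 0 := sub_ne_zero.mpr hθ.symm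
  have hsum : cos ((m + 2) * θ) + cos (m * θ) = 2 * cos ((m + 1) * θ) * cos θ := by
    rw [cos_add_cos]
    ring_nf
  field_simp
  rw [mul_comm θ]
  linear_combination -hsum

theorem sum_one_sub_cos_nat_mul_div {ι : Type*} (s : Finset ι) (θ : ι → ℝ) {L : ℕ}
    (hθ : ∀ i ∈ s, cos (θ i) ≠ 1)
    (hcos : ∀ j : ℕ, 0 < j → j < L → ∑ i ∈ s, cos (j * θ i) = 0) :
    ∀ l ≤ L, ∑ i ∈ s, (1 - cos (l * θ i)) / (1 - cos (θ i)) = l * #s := by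
  intro l
  induction l using Nat.twoStepInduction with
  | zero => simp
  | one =>
    intro _
    rw [sum_congr rfl fun i hi ↦ by
      rw [Nat.cast_one, one_mul, div_self (sub_ne_zero.mpr (hθ i hi).symm)]]
    simp
  | more m ih₀ ih₁ =>
    intro hm
    have hstep : ∀ i ∈ s, (1 - cos (↑(m + 2) * θ i)) / (1 - cos (θ i))
        = 2 * ((1 - cos (↑(m + 1) * θ i)) / (1 - cos (θ i)))
          - (1 - cos (m * θ i)) / (1 - cos (θ i)) + 2 * cos (↑(m + 1) * θ i) := fun i hi ↦ by
      push_cast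
      exact one_sub_cos_add_two_mul_div (hθ i hi) m
    rw [sum_congr rfl hstep, sum_add_distrib, sum_sub_distrib, ← mul_sum, ← mul_sum,
      ih₀ (by omega), ih₁ (by omega), hcos (m + 1) (by omega) (by omega)]
    push_cast
    ring

theorem two_mul_sin_mul_sum_cos_odd_mul (x : ℝ) (M : ℕ) :
    2 * sin x * ∑ n ∈ Icc 1 M, cos ((2 * n - 1) * x) = sin (2 * M * x) := by
  induction M with
  | zero => simp
  | succ k ih =>
    rw [sum_Icc_succ_top (by omega), mul_add, ih]
    have h := sin_sub_sin (2 * (k + 1) * x) (2 * k * x)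
    rw [show (2 * (k + 1) * x - 2 * k * x) / 2 = x by ring,
      show (2 * (k + 1) * x + 2 * k * x) / 2 = (2 * (k + 1) - 1) * x by ring] at h
    push_cast
    linear_combination -h

theorem sum_cos_nat_mul_odd_mul_pi_div_eq_zero {M j : ℕ} (hj₀ : 0 < j) (hj : j < 2 * M) :
    ∑ n ∈ Icc 1 M, cos (j * ((2 * n - 1) * π / (2 * M))) = 0 := by
  set x : ℝ := j * π / (2 * M)
  have hM : (0 : ℝ) < M := by exact_mod_cast (show 0 < M by omega)
  have hx_pos : 0 < x := by positivity
  have hx_lt : x < π := by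
    rw [div_lt_iff₀ (by positivity)]
    have : (j : ℝ) < 2 * M := by exact_mod_cast hj
    nlinarith [pi_pos]
  have hsin : 2 * sin x ≠ 0 := by linarith [sin_pos_of_pos_of_lt_pi hx_pos hx_lt]
  have hsum := two_mul_sin_mul_sum_cos_odd_mul x M
  rw [show 2 * M * x = (j : ℤ) * π by push_cast [x]; field_simp, sin_int_mul_pi] at hsum
  rw [← (mul_eq_zero.mp hsum).resolve_left hsin]
  refine sum_congr rfl fun n _ ↦ congrArg cos ?_
  ring

theorem cos_odd_mul_pi_div_ne_one {M n : ℕ} (hn₁ : 1 ≤ n) (hn : n ≤ M) :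
    cos ((2 * n - 1) * π / (2 * M)) ≠ 1 := by
  have hn' : (1 : ℝ) ≤ n := by exact_mod_cast hn₁
  have hnM : (n : ℝ) ≤ M := by exact_mod_cast hn
  have hpos : 0 < (2 * n - 1) * π / (2 * M) := by
    apply div_pos <;> nlinarith [pi_pos]
  have hlt : (2 * n - 1) * π / (2 * M) < 2 * π := by
    rw [div_lt_iff₀ (by linarith)]
    nlinarith [pi_pos]
  rw [Ne, cos_eq_one_iff_of_lt_of_lt (by linarith) hlt]
  exact hpos.ne'

theorem odd_angle_resistance_sum_general (N l : ℕ) (hNeven : Even N) (hl : l ≤ N) :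
    (1 / (N : ℝ)) * ∑ n ∈ Finset.Icc 1 (N / 2),
      (1 - Real.cos ((2 * n - 1 : ℝ) * l * Real.pi / N)) /
        (1 - Real.cos ((2 * n - 1 : ℝ) * Real.pi / N))
    = (l : ℝ) / 2 := by
  obtain ⟨M, rfl⟩ := hNeven
  rw [← two_mul] at hl ⊢
  have hsum := sum_one_sub_cos_nat_mul_div (Icc 1 M) (fun n : ℕ ↦ (2 * n - 1) * π / (2 * M))
    (fun n hn ↦ cos_odd_mul_pi_div_ne_one (mem_Icc.mp hn).1 (mem_Icc.mp hn).2)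
    (fun j hj₀ hj ↦ sum_cos_nat_mul_odd_mul_pi_div_eq_zero hj₀ hj) l hl
  simp only [Nat.card_Icc, add_tsub_cancel_right] at hsum
  rw [Nat.mul_div_cancel_left M two_pos]
  push_cast
  calc _ = 1 / (2 * M : ℝ) * ∑ n ∈ Icc 1 M,
        (1 - cos (l * ((2 * n - 1) * π / (2 * M)))) / (1 - cos ((2 * n - 1) * π / (2 * M))) := by
        congr 1
        refine sum_congr rfl fun n _ ↦ ?_
        ring_nf
    _ = l / 2 := by
        rw [hsum]
        rcases M.eq_zero_or_pos with rfl | hM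
        · simp [Nat.le_zero.mp hl]
        · field_simp

theorem odd_angle_resistance_sum (N l : ℕ) (hN : 0 < N) (hNeven : Even N) (hl : l ≤ N) :
    (1 / (N : ℝ)) * ∑ n ∈ Finset.Icc 1 (N / 2),
      (1 - Real.cos ((2 * n - 1 : ℝ) * l * Real.pi / N)) /
        (1 - Real.cos ((2 * n - 1 : ℝ) * Real.pi / N))
    = (l : ℝ) / 2 :=
  odd_angle_resistance_sum_general N l hNeven hl
end

section
/- For all integers N ≥ 1 and l with 0 ≤ l ≤ N, one has Σ_{n=1}^{N-1} sin²(n l π/N) / sin⁴(n π/N) = ( l²(N−l)² + 2 l (N−l) ) / 3. -/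
/-!
As functions of `l`, the sums `T p N l = ∑ₙ sin²(nlπ/N) / sin^p(nπ/N)` satisfy second-difference
equations: `sin²(x + a) + sin²(x - a) - 2 sin² x = 2 sin² a cos 2x` gives
`Δ²T₂ = 2 ∑ₙ cos(2π(l+1)n/N) = -2` (the nontrivial `N`-th roots of unity sum to `-1`) and
`Δ²T₄ = 2 T₄(1) - 4 T₂(l+1)`. Together with `T_p(0) = T_p(N) = 0` this gives `T₂(l) = l(N-l)`, and
shows that `d = T₄ - (l²(N-l)² + 2l(N-l))/3` satisfies `d(0) = d(N) = 0` with constant second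
difference `2 d(1)`. Hence `d(l) = l² d(1)`, and `l = N` forces `d = 0`; in particular the value
`T₄(1) = ∑ₙ csc²(nπ/N) = (N²-1)/3` never has to be computed separately.
-/

open Real Finset

theorem Real.sin_nat_mul_pi_div_ne_zero {N k : ℕ} (hN : 0 < N) (hk : ¬ N ∣ k) :
    sin (k * π / N) ≠ 0 := by
  rw [Ne, sin_eq_zero_iff]
  rintro ⟨m, hm⟩
  have hkm : (k : ℝ) = N * m := by
    field_simp at hm
    linarith
  exact hk (Int.natCast_dvd_natCast.mp ⟨m, by exact_mod_cast hkm⟩)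

theorem Real.sin_nat_mul_pi_div_ne_zero_of_mem_Icc {N n : ℕ} (hn : n ∈ Icc 1 (N - 1)) :
    sin (n * π / N) ≠ 0 := by
  rw [mem_Icc] at hn
  exact sin_nat_mul_pi_div_ne_zero (by omega) (Nat.not_dvd_of_pos_of_lt (by omega) (by omega))

theorem Real.sum_range_cos_two_pi_mul_div_eq_zero {N k : ℕ} (hN : 0 < N) (hk : ¬ N ∣ k) :
    ∑ n ∈ range N, cos (2 * π * k * n / N) = 0 := by
  have h := sin_mul_sum_cos N (2 * π * k / N) 0
  rw [show N * (2 * π * k / N) / 2 = k * π by field_simp, sin_nat_mul_pi, zero_mul,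
    show 2 * π * k / N / 2 = k * π / N by ring] at h
  simpa only [add_zero, div_mul_eq_mul_div] using
    (mul_eq_zero.mp h).resolve_left (sin_nat_mul_pi_div_ne_zero hN hk)

theorem Real.sum_Icc_cos_two_pi_mul_div_eq_neg_one {N k : ℕ} (hN : 0 < N) (hk : ¬ N ∣ k) :
    ∑ n ∈ Icc 1 (N - 1), cos (2 * π * k * n / N) = -1 := by
  have hrange : range N = insert 0 (Icc 1 (N - 1)) := by
    ext n
    simp only [mem_range, mem_insert, mem_Icc]
    omega
  have h := sum_range_cos_two_pi_mul_div_eq_zero hN hk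
  rw [hrange, sum_insert (by simp)] at h
  simp only [CharP.cast_eq_zero, mul_zero, zero_div, cos_zero] at h
  linarith

theorem sin_sq_add_sin_sq_sub_two_mul_sin_sq (x a : ℝ) :
    sin (x + a) ^ 2 + sin (x - a) ^ 2 - 2 * sin x ^ 2 = 2 * sin a ^ 2 * cos (2 * x) := by
  rw [sin_add, sin_sub, cos_two_mul_eq_one_sub]
  linear_combination (2 * sin x ^ 2) * sin_sq_add_cos_sq a + 2 * sin a ^ 2 * sin_sq_add_cos_sq x

theorem eq_of_second_diff_eq_const {d : ℕ → ℝ} {N : ℕ} {c : ℝ}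
    (h : ∀ l, l + 2 ≤ N → d (l + 2) - 2 * d (l + 1) + d l = c) :
    ∀ l ≤ N, d l = d 0 + l * (d 1 - d 0) + c * (l * (l - 1) / 2) := by
  intro l
  induction l using Nat.twoStepInduction with
  | zero => simp
  | one => simp
  | more l ih₀ ih₁ =>
    intro hl
    have hrec := h l hl
    rw [ih₀ (by omega), ih₁ (by omega)] at hrec
    push_cast at hrec ⊢
    linear_combination hrec

theorem eq_zero_of_second_diff_eq_const_mul {d : ℕ → ℝ} {N : ℕ} {c : ℝ} (hN : 0 < N)
    (hc : 0 ≤ c) (hd₀ : d 0 = 0) (hdN : d N = 0)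
    (h : ∀ l, l + 2 ≤ N → d (l + 2) - 2 * d (l + 1) + d l = c * d 1) :
    ∀ l ≤ N, d l = 0 := by
  have hd (l : ℕ) (hl : l ≤ N) : d l = d 1 * (l + c * (l * (l - 1) / 2)) := by
    rw [eq_of_second_diff_eq_const h l hl, hd₀]
    ring
  have hN1 : (1 : ℝ) ≤ N := by exact_mod_cast hN
  have h₁ : d 1 = 0 := by
    have hpos : 0 < (N : ℝ) + c * (N * (N - 1) / 2) := by positivity
    simpa [hdN, hpos.ne'] using hd N le_rfl
  intro l hl
  rw [hd l hl, h₁, zero_mul]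

namespace ChiralPotts

noncomputable def T (p N l : ℕ) : ℝ :=
  ∑ n ∈ Icc 1 (N - 1), sin (n * l * π / N) ^ 2 / sin (n * π / N) ^ p

theorem T_zero (p N : ℕ) : T p N 0 = 0 := by
  simp [T]

theorem T_self (p N : ℕ) : T p N N = 0 := by
  rcases Nat.eq_zero_or_pos N with rfl | hN
  · simp [T]
  · refine sum_eq_zero fun n _ => ?_
    rw [show (n : ℝ) * N * π / N = n * π by field_simp, sin_nat_mul_pi]
    simp

theorem T_add_two_sub_two_mul_T_add_one_add_T (p N l : ℕ) :
    T (p + 2) N (l + 2) - 2 * T (p + 2) N (l + 1) + T (p + 2) N l =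
      2 * ∑ n ∈ Icc 1 (N - 1), cos (2 * π * (l + 1) * n / N) / sin (n * π / N) ^ p := by
  simp only [T, mul_sum, ← sum_sub_distrib, ← sum_add_distrib]
  refine sum_congr rfl fun n hn => ?_
  set x : ℝ := n * (l + 1) * π / N
  set a : ℝ := n * π / N
  have hs : sin a ≠ 0 := sin_nat_mul_pi_div_ne_zero_of_mem_Icc hn
  rw [show (n : ℝ) * ((l + 2 : ℕ) : ℝ) * π / N = x + a by push_cast; ring,
    show (n : ℝ) * ((l + 1 : ℕ) : ℝ) * π / N = x by push_cast; ring,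
    show (n : ℝ) * l * π / N = x - a by ring,
    show 2 * π * (l + 1) * n / N = 2 * x by ring]
  have key := sin_sq_add_sin_sq_sub_two_mul_sin_sq x a
  generalize cos (2 * x) = C at key ⊢
  field_simp
  linear_combination sin a ^ p * key

theorem T_two {N l : ℕ} (hN : 0 < N) (hl : l ≤ N) : T 2 N l = l * (N - l) := by
  suffices ∀ l ≤ N, T 2 N l - l * (N - l) = 0 from sub_eq_zero.mp (this l hl)
  refine eq_zero_of_second_diff_eq_const_mul (c := 0) hN le_rfl (by simp [T_zero])
    (by simp [T_self]) fun l hl => ?_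
  have hcos := sum_Icc_cos_two_pi_mul_div_eq_neg_one (k := l + 1) hN
    (Nat.not_dvd_of_pos_of_lt (by omega) (by omega))
  have hdiff : T 2 N (l + 2) - 2 * T 2 N (l + 1) + T 2 N l = _ :=
    T_add_two_sub_two_mul_T_add_one_add_T 0 N l
  simp only [pow_zero, div_one] at hdiff
  push_cast at hcos hdiff ⊢
  linear_combination hdiff + 2 * hcos

theorem sum_cos_div_sin_sq (N k : ℕ) :
    ∑ n ∈ Icc 1 (N - 1), cos (2 * π * k * n / N) / sin (n * π / N) ^ 2 =
      T 4 N 1 - 2 * T 2 N k := by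
  simp only [T, mul_sum, ← sum_sub_distrib]
  refine sum_congr rfl fun n hn => ?_
  have hs := sin_nat_mul_pi_div_ne_zero_of_mem_Icc hn
  rw [show 2 * π * k * n / N = 2 * (n * k * π / N) by ring, cos_two_mul_eq_one_sub,
    Nat.cast_one, mul_one]
  field_simp

end ChiralPotts

open ChiralPotts

theorem chiral_potts_T4 (N l : ℕ) (hN : 1 ≤ N) (hl : l ≤ N) :
    ∑ n ∈ Finset.Icc 1 (N - 1),
      (Real.sin (n * l * Real.pi / N)) ^ 2 / (Real.sin (n * Real.pi / N)) ^ 4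
    = ((l : ℝ) ^ 2 * ((N : ℝ) - l) ^ 2 + 2 * l * ((N : ℝ) - l)) / 3 := by
  set g : ℕ → ℝ := fun l => ((l : ℝ) ^ 2 * ((N : ℝ) - l) ^ 2 + 2 * l * ((N : ℝ) - l)) / 3
  suffices ∀ l ≤ N, T 4 N l - g l = 0 from sub_eq_zero.mp (this l hl)
  refine eq_zero_of_second_diff_eq_const_mul (c := 2) hN zero_le_two (by simp [T_zero, g])
    (by simp [T_self, g]) fun l hl => ?_
  have hdiff : T 4 N (l + 2) - 2 * T 4 N (l + 1) + T 4 N l = _ :=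
    T_add_two_sub_two_mul_T_add_one_add_T 2 N l
  have hsum := sum_cos_div_sin_sq N (l + 1)
  push_cast at hsum
  rw [hsum, T_two hN (by omega)] at hdiff
  simp only [g]
  push_cast at hdiff ⊢
  linear_combination hdiff
end

section
/- For every integer k ≥ 0, one has ((k+2)/2)² · Σ_{n=1}^{k+1} 1 / sin⁴( n π/(k+2) ) = (1/5) · D · ( D + 2(k+2) ), where D = (k+1)(k+2)(k+3)/6. -/
/-!
Put `m = k + 2`, `ζ = exp (2πi/m)` and `b n = (1 - ζ ^ n)⁻¹`. Then
`sin⁻⁴ (nπ/m) = 16 (b n ^ 2 - b n) ^ 2`, so the sum is a combination of the power sums of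
`b 1, …, b (m - 1)` of degree at most four. These numbers are the roots of `X ^ m - (X - 1) ^ m`,
whose leading coefficient is `m`; hence their elementary symmetric functions are
`choose m (j + 1) / m`, and Newton's identities turn these into the power sums, giving
`∑ sin⁻⁴ (nπ/m) = (m² - 1) (m² + 11) / 45`.
-/

open Finset Polynomial

section SymmetricFunctions

variable {ι R : Type*} [CommRing R] (s : Finset ι) (f : ι → R)

theorem Finset.sum_pow_eq_esymm_sub_sum {k : ℕ} (hk : 0 < k) :
    ∑ i ∈ s, f i ^ k = (-1) ^ (k + 1) * k * (s.val.map f).esymm k -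
      ∑ a ∈ antidiagonal k with a.1 ∈ Set.Ioo 0 k,
        (-1) ^ a.1 * (s.val.map f).esymm a.1 * ∑ i ∈ s, f i ^ a.2 := by
  have h := congrArg (MvPolynomial.aeval fun i : s => f i)
    (MvPolynomial.psum_eq_mul_esymm_sub_sum s R k hk)
  have hesymm (j : ℕ) : MvPolynomial.aeval (fun i : s => f i) (MvPolynomial.esymm s R j) =
      (s.val.map f).esymm j := by
    rw [MvPolynomial.aeval_esymm_eq_multiset_esymm, univ_eq_attach, attach_val]
    exact congrArg (Multiset.esymm · j) (Multiset.attach_map_val' s.val f)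
  have hpsum (j : ℕ) : MvPolynomial.aeval (fun i : s => f i) (MvPolynomial.psum s R j) =
      ∑ i ∈ s, f i ^ j := by
    simp [MvPolynomial.psum, sum_attach s (fun i => f i ^ j)]
  simpa only [map_sub, map_mul, map_sum, map_pow, map_neg, map_one, map_natCast, hesymm, hpsum]
    using h

theorem Finset.sum_eq_esymm_one : ∑ i ∈ s, f i = (s.val.map f).esymm 1 := by
  simp [Multiset.esymm, Multiset.powersetCard_one]

theorem Finset.sum_pow_two_eq_esymm :
    ∑ i ∈ s, f i ^ 2 =
      (s.val.map f).esymm 1 * ∑ i ∈ s, f i - 2 * (s.val.map f).esymm 2 := by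
  rw [s.sum_pow_eq_esymm_sub_sum f two_pos]
  simp [sum_filter, Nat.sum_antidiagonal_eq_sum_range_succ_mk, sum_range_succ]
  ring

theorem Finset.sum_pow_three_eq_esymm :
    ∑ i ∈ s, f i ^ 3 = (s.val.map f).esymm 1 * ∑ i ∈ s, f i ^ 2 -
      (s.val.map f).esymm 2 * ∑ i ∈ s, f i + 3 * (s.val.map f).esymm 3 := by
  rw [s.sum_pow_eq_esymm_sub_sum f (by norm_num)]
  simp [sum_filter, Nat.sum_antidiagonal_eq_sum_range_succ_mk, sum_range_succ]
  ring

theorem Finset.sum_pow_four_eq_esymm :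
    ∑ i ∈ s, f i ^ 4 = (s.val.map f).esymm 1 * ∑ i ∈ s, f i ^ 3 -
      (s.val.map f).esymm 2 * ∑ i ∈ s, f i ^ 2 + (s.val.map f).esymm 3 * ∑ i ∈ s, f i -
      4 * (s.val.map f).esymm 4 := by
  rw [s.sum_pow_eq_esymm_sub_sum f (by norm_num)]
  simp [sum_filter, Nat.sum_antidiagonal_eq_sum_range_succ_mk, sum_range_succ]
  ring

theorem Finset.coeff_prod_X_sub_C {k : ℕ} (hk : k ≤ #s) :
    (∏ i ∈ s, (X - C (f i))).coeff k = (-1) ^ (#s - k) * (s.val.map f).esymm (#s - k) := by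
  simpa [Multiset.map_map, Function.comp_def] using
    Multiset.prod_X_sub_C_coeff (s.val.map f) (k := k) (by simpa using hk)

end SymmetricFunctions

theorem IsPrimitiveRoot.pow_sub_pow_eq_prod_range {R : Type*} [CommRing R] [IsDomain R] {ζ : R}
    {m : ℕ} (hζ : IsPrimitiveRoot ζ m) (hm : 0 < m) (x y : R) :
    x ^ m - y ^ m = ∏ i ∈ range m, (x - ζ ^ i * y) := by
  have : NeZero m := ⟨hm.ne'⟩
  rw [hζ.pow_sub_pow_eq_prod_sub_mul x y hm]
  refine (prod_nbij (ζ ^ ·) (fun i _ => ?_) (fun i hi j hj h => ?_) (fun μ hμ => ?_)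
    (fun _ _ => rfl)).symm
  · rw [Polynomial.mem_nthRootsFinset hm, ← pow_mul, mul_comm, pow_mul, hζ.pow_eq_one, one_pow]
  · exact hζ.pow_inj (mem_range.1 hi) (mem_range.1 hj) h
  · obtain ⟨i, hi, rfl⟩ :=
      hζ.eq_pow_of_pow_eq_one ((Polynomial.mem_nthRootsFinset hm 1).1 hμ)
    exact ⟨i, mem_range.2 hi, rfl⟩

namespace IsPrimitiveRoot

variable {K : Type*} [Field K] {ζ : K} {m : ℕ}

theorem one_sub_pow_ne_zero (hζ : IsPrimitiveRoot ζ m) {n : ℕ} (hn : n ∈ Icc 1 (m - 1)) :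
    1 - ζ ^ n ≠ 0 := by
  rw [mem_Icc] at hn
  exact sub_ne_zero.2 fun h => hζ.pow_ne_one_of_pos_of_lt (by omega) (by omega) h.symm

theorem X_pow_sub_X_sub_one_pow_eq_prod (hζ : IsPrimitiveRoot ζ m) (hm : 0 < m) :
    X ^ m - (X - 1) ^ m =
      C (∏ n ∈ Icc 1 (m - 1), (1 - ζ ^ n)) *
        ∏ n ∈ Icc 1 (m - 1), (X - C (1 - ζ ^ n)⁻¹) := by
  have h := (hζ.map_of_injective C_injective).pow_sub_pow_eq_prod_range hm (X - 1) X
  have hsplit : range m = insert 0 (Icc 1 (m - 1)) := by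
    ext n
    simp only [mem_range, mem_insert, mem_Icc]
    omega
  have hfactor : ∀ n ∈ Icc 1 (m - 1),
      (X - 1 : K[X]) - C ζ ^ n * X = C (1 - ζ ^ n) * (X - C (1 - ζ ^ n)⁻¹) := by
    intro n hn
    rw [mul_sub, ← C_mul, mul_inv_cancel₀ (hζ.one_sub_pow_ne_zero hn), map_sub, map_pow, C_1]
    ring
  rw [hsplit, prod_insert (by simp), prod_congr rfl hfactor, prod_mul_distrib, ← map_prod,
    pow_zero, one_mul, sub_sub_cancel_left] at h
  linear_combination -h

theorem mul_esymm_inv_one_sub_pow (hζ : IsPrimitiveRoot ζ m) (hm : 0 < m) (j : ℕ) :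
    (m : K) * ((Icc 1 (m - 1)).val.map fun n => (1 - ζ ^ n)⁻¹).esymm j = m.choose (j + 1) := by
  set e := ((Icc 1 (m - 1)).val.map fun n => (1 - ζ ^ n)⁻¹).esymm
  have hcoeff (i : ℕ) (hi : i ≤ m - 1) :
      (∏ n ∈ Icc 1 (m - 1), (1 - ζ ^ n)) * e (m - 1 - i) = m.choose i := by
    have h := congrArg (coeff · i) (hζ.X_pow_sub_X_sub_one_pow_eq_prod hm)
    have hbinom : ((X - 1 : K[X]) ^ m).coeff i = (-1) ^ (m - 1 - i + 1) * m.choose i := by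
      rw [sub_eq_add_neg, ← C_1, ← C_neg, coeff_X_add_C_pow,
        show m - i = m - 1 - i + 1 by omega]
    simp only [coeff_C_mul, coeff_sub, coeff_X_pow, hbinom, if_neg (show i ≠ m by omega)] at h
    rw [coeff_prod_X_sub_C _ _ (by rw [Nat.card_Icc]; omega), Nat.card_Icc,
      Nat.add_sub_cancel] at h
    apply mul_left_cancel₀ (pow_ne_zero (m - 1 - i) (neg_ne_zero.2 (one_ne_zero (α := K))))
    linear_combination -h
  have hprod : ∏ n ∈ Icc 1 (m - 1), (1 - ζ ^ n) = m := by
    simpa [e, Multiset.esymm, Nat.choose_symm (show 1 ≤ m from hm)] using hcoeff (m - 1) le_rfl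
  rcases le_or_gt j (m - 1) with hj | hj
  · rw [← hprod, ← Nat.choose_symm (show j + 1 ≤ m by omega),
      show m - (j + 1) = m - 1 - j by omega,
      ← hcoeff _ (Nat.sub_le _ _), Nat.sub_sub_self hj]
  · rw [Nat.choose_eq_zero_of_lt (by omega)]
    simp only [e, Multiset.esymm]
    rw [Multiset.powersetCard_eq_empty _ (by simpa using hj)]
    simp

theorem sum_sq_sub_inv_one_sub_pow [CharZero K] (hζ : IsPrimitiveRoot ζ m) (hm : 0 < m) :
    720 * ∑ n ∈ Icc 1 (m - 1), (((1 - ζ ^ n)⁻¹) ^ 2 - (1 - ζ ^ n)⁻¹) ^ 2 =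
      ((m : K) ^ 2 - 1) * ((m : K) ^ 2 + 11) := by
  set s := Icc 1 (m - 1)
  set b : ℕ → K := fun n => (1 - ζ ^ n)⁻¹
  have hm' : (m : K) ≠ 0 := Nat.cast_ne_zero.2 hm.ne'
  have hesymm (j : ℕ) : (s.val.map b).esymm j =
      (descPochhammer K (j + 1)).eval (m : K) / ((j + 1).factorial * m) := by
    rw [← div_div, ← Nat.cast_choose_eq_descPochhammer_div,
      ← hζ.mul_esymm_inv_one_sub_pow hm, mul_div_cancel_left₀ _ hm']
  have hexpand : ∑ n ∈ s, (b n ^ 2 - b n) ^ 2 =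
      ∑ n ∈ s, b n ^ 4 - 2 * ∑ n ∈ s, b n ^ 3 + ∑ n ∈ s, b n ^ 2 := by
    rw [mul_sum, ← sum_sub_distrib, ← sum_add_distrib]
    exact sum_congr rfl fun n _ => by ring
  rw [hexpand, s.sum_pow_four_eq_esymm, s.sum_pow_three_eq_esymm, s.sum_pow_two_eq_esymm,
    s.sum_eq_esymm_one]
  simp only [hesymm, descPochhammer_succ_eval, descPochhammer_zero, eval_one]
  field_simp
  ring

end IsPrimitiveRoot

-- For `sin θ = 0` both sides are `0`, as `0⁻¹ = 0`.
theorem Complex.inv_sin_pow_four (θ : ℂ) :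
    (sin θ ^ 4)⁻¹ =
      16 * (((1 - exp (2 * θ * I))⁻¹) ^ 2 - (1 - exp (2 * θ * I))⁻¹) ^ 2 := by
  set u := exp (θ * I) with hu_def
  have hu : u ≠ 0 := exp_ne_zero _
  have hexp : exp (2 * θ * I) = u ^ 2 := by rw [← exp_nat_mul]; ring_nf
  have hsin : sin θ = (1 - u ^ 2) * I / (2 * u) := by
    rw [sin, show -θ * I = -(θ * I) by ring, exp_neg, ← hu_def]
    field_simp
  rw [hexp, hsin]
  rcases eq_or_ne (1 - u ^ 2) 0 with h | h
  · simp [h]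
  · field_simp
    rw [I_pow_four]
    ring

open Real in
theorem verlinde_dim_genus3 (k : ℕ) :
    (((k : ℝ) + 2) / 2) ^ 2 *
      ∑ n ∈ Finset.Icc 1 (k + 1), 1 / (Real.sin (n * Real.pi / (k + 2))) ^ 4
    = (1 / 5) * (((k : ℝ) + 1) * ((k : ℝ) + 2) * ((k : ℝ) + 3) / 6) *
        (((k : ℝ) + 1) * ((k : ℝ) + 2) * ((k : ℝ) + 3) / 6 + 2 * ((k : ℝ) + 2)) := by
  have hζ := Complex.isPrimitiveRoot_exp (k + 2) (by omega)
  set ζ := Complex.exp (2 * π * Complex.I / (k + 2 : ℕ))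
  have hterm (n : ℕ) : ((1 / sin (n * π / (k + 2)) ^ 4 : ℝ) : ℂ) =
      16 * (((1 - ζ ^ n)⁻¹) ^ 2 - (1 - ζ ^ n)⁻¹) ^ 2 := by
    rw [one_div, Complex.ofReal_inv, Complex.ofReal_pow, Complex.ofReal_sin,
      Complex.inv_sin_pow_four, ← Complex.exp_nat_mul]
    push_cast
    ring_nf
  have hsum := hζ.sum_sq_sub_inv_one_sub_pow (by omega)
  apply Complex.ofReal_injective
  rw [Complex.ofReal_mul, Complex.ofReal_sum, sum_congr rfl fun n _ => hterm n, ← mul_sum]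
  push_cast at hsum ⊢
  linear_combination (((k : ℂ) + 2) ^ 2 / 180) * hsum
end

section
/- For every integer k ≥ 0, one has ((k+2)/2)³ · Σ_{n=1}^{k+1} 1 / sin⁶( n π/(k+2) ) = (1/35) · D · ( D · ( 2(k+1)(k+2)(k+3) + 27(k+2) ) / 6 + 6(k+2)² ), where D = (k+1)(k+2)(k+3)/6. -/
/-!
With `z = e^{2iθ}` and `w = (1 - z)⁻¹` one has `(4 sin² θ)⁻¹ = w (1 - w)`, so for `N = k + 2`
the sum is `64 ∑ (w (1 - w))³` over the nontrivial `N`-th roots of unity `z`, a combination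
of the power sums `S k = ∑_{0 < n < N} (1 - ζ ^ n)⁻¹ ^ k`, `ζ = e^{2πi/N}`.

These power sums come from the truncations `G j z = ∑_{m < N} C(m + j, j) z ^ m` of the series
of `(1 - z)^{-(j+1)}`. At a nontrivial root, `(1 - z) G (j + 1) = G j - C(N + j, j + 1)` makes
`G j` a polynomial in `w` with binomial coefficients; summed over all the roots, `G j` only
keeps its constant term `N`. Comparing the two gives a triangular linear system for
`S 1, …, S 6` with diagonal entries `N`.
-/

open Real Finset

section PartialSum

variable {R : Type*} [CommRing R]

def negBinomialPartialSum (N j : ℕ) (z : R) : R :=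
  ∑ m ∈ range N, ((m + j).choose j : R) * z ^ m

theorem one_sub_mul_negBinomialPartialSum_succ (N j : ℕ) (z : R) :
    (1 - z) * negBinomialPartialSum N (j + 1) z =
      negBinomialPartialSum N j z - ((N + j).choose (j + 1) : R) * z ^ N := by
  induction N with
  | zero => simp [negBinomialPartialSum]
  | succ N ih =>
    simp only [negBinomialPartialSum, sum_range_succ] at ih ⊢
    have pascal :
        ((N + 1 + j).choose (j + 1) : R) = (N + j).choose j + (N + j).choose (j + 1) := by
      rw [show N + 1 + j = N + j + 1 by omega, Nat.choose_succ_succ', Nat.cast_add]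
    rw [mul_add, ih, pascal, show N + (j + 1) = N + j + 1 by omega, Nat.choose_succ_succ']
    push_cast
    ring

theorem negBinomialPartialSum_one (N j : ℕ) :
    negBinomialPartialSum N j (1 : R) = (N + j).choose (j + 1) := by
  simpa [sub_eq_zero] using (one_sub_mul_negBinomialPartialSum_succ N j (1 : R)).symm

end PartialSum

section RootsOfUnity

variable {K : Type*} [Field K] {N : ℕ}

theorem negBinomialPartialSum_eq_of_pow_eq_one {z : K} (hzN : z ^ N = 1) (hz : z ≠ 1)
    (j : ℕ) :
    negBinomialPartialSum N j z =
      -∑ i ∈ range j, ((N + i).choose (i + 1) : K) * (1 - z)⁻¹ ^ (j - i) := by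
  induction j with
  | zero => simp [negBinomialPartialSum, geom_sum_eq hz, hzN]
  | succ j ih =>
    have hz' : 1 - z ≠ 0 := sub_ne_zero.mpr hz.symm
    have shift : ∀ i ∈ range j, ((N + i).choose (i + 1) : K) * (1 - z)⁻¹ ^ (j + 1 - i) =
        (1 - z)⁻¹ * (((N + i).choose (i + 1) : K) * (1 - z)⁻¹ ^ (j - i)) := fun i hi => by
      rw [Nat.sub_add_comm (mem_range.mp hi).le, pow_succ]
      ring
    calc negBinomialPartialSum N (j + 1) z
        = (1 - z)⁻¹ * ((1 - z) * negBinomialPartialSum N (j + 1) z) := by field_simp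
      _ = (1 - z)⁻¹ * (negBinomialPartialSum N j z - (N + j).choose (j + 1)) := by
        rw [one_sub_mul_negBinomialPartialSum_succ, hzN, mul_one]
      _ = _ := by
        rw [ih, sum_range_succ, sum_congr rfl shift, ← mul_sum, Nat.add_sub_cancel_left,
          pow_one]
        ring

theorem IsPrimitiveRoot.sum_negBinomialPartialSum_pow {ζ : K} (hζ : IsPrimitiveRoot ζ N)
    (j : ℕ) :
    ∑ n ∈ range N, negBinomialPartialSum N j (ζ ^ n) = N := by
  have vanish : ∀ m ∈ range N, m ≠ 0 → ∑ n ∈ range N, (ζ ^ n) ^ m = 0 := by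
    intro m hm hm0
    rw [sum_congr rfl fun n _ => pow_right_comm ζ n m,
      geom_sum_eq (hζ.pow_ne_one_of_pos_of_lt hm0 (mem_range.mp hm)), pow_right_comm,
      hζ.pow_eq_one, one_pow, sub_self, zero_div]
  simp only [negBinomialPartialSum]
  rw [sum_comm]
  simp only [← mul_sum]
  rw [sum_eq_single 0 (fun m hm hm0 => by rw [vanish m hm hm0, mul_zero])]
  · simp
  · simp_all

theorem IsPrimitiveRoot.sum_choose_mul_sum_inv_one_sub_pow {ζ : K} (hζ : IsPrimitiveRoot ζ N)
    (j : ℕ) :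
    ∑ i ∈ range j,
        ((N + i).choose (i + 1) : K) * ∑ n ∈ Ico 1 N, (1 - ζ ^ n)⁻¹ ^ (j - i) =
      (N + j).choose (j + 1) - N := by
  rcases N.eq_zero_or_pos with rfl | hN
  · simp
  have at_root : ∀ n ∈ Ico 1 N, negBinomialPartialSum N j (ζ ^ n) =
      -∑ i ∈ range j, ((N + i).choose (i + 1) : K) * (1 - ζ ^ n)⁻¹ ^ (j - i) := by
    intro n hn
    obtain ⟨hn1, hnN⟩ := mem_Ico.mp hn
    refine negBinomialPartialSum_eq_of_pow_eq_one ?_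
      (hζ.pow_ne_one_of_pos_of_lt (by omega) hnN) j
    rw [pow_right_comm, hζ.pow_eq_one, one_pow]
  have total := hζ.sum_negBinomialPartialSum_pow j
  rw [range_eq_Ico, sum_eq_sum_Ico_succ_bot hN, pow_zero, negBinomialPartialSum_one, zero_add,
    sum_congr rfl at_root, sum_neg_distrib, sum_comm] at total
  simp only [← mul_sum] at total
  linear_combination -total

theorem IsPrimitiveRoot.sum_inv_one_sub_mul_pow_three [CharZero K] {ζ : K}
    (hζ : IsPrimitiveRoot ζ N) (hN : N ≠ 0) :
    ∑ n ∈ Ico 1 N, ((1 - ζ ^ n)⁻¹ * (1 - (1 - ζ ^ n)⁻¹)) ^ 3 =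
      ((N : K) ^ 2 - 1) * (2 * N ^ 4 + 23 * N ^ 2 + 191) / 60480 := by
  obtain ⟨S, hS⟩ :
      ∃ S : ℕ → K, S = fun k => ∑ n ∈ Ico 1 N, (1 - ζ ^ n)⁻¹ ^ k := ⟨_, rfl⟩
  have cast_choose (i : ℕ) :
      ((N + i).choose (i + 1) : K) =
        (ascPochhammer K (i + 1)).eval (N : K) / (i + 1).factorial := by
    rw [Nat.cast_choose_eq_ascPochhammer_div]
    congr
    omega
  have system (j : ℕ) : ∑ i ∈ range j, ((N + i).choose (i + 1) : K) * S (j - i) =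
      (N + j).choose (j + 1) - N := by
    subst hS
    exact hζ.sum_choose_mul_sum_inv_one_sub_pow j
  have e1 := system 1
  have e2 := system 2
  have e3 := system 3
  have e4 := system 4
  have e5 := system 5
  have e6 := system 6
  norm_num [sum_range_succ, cast_choose, ascPochhammer_succ_eval, Nat.factorial]
    at e1 e2 e3 e4 e5 e6
  have hN' : (N : K) ≠ 0 := Nat.cast_ne_zero.mpr hN
  have h1 : S 1 = (N - 1) / 2 := mul_left_cancel₀ hN' (by linear_combination e1)
  have h2 : S 2 = -(N - 1) * (N - 5) / 12 := mul_left_cancel₀ hN' (by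
    rw [h1] at e2; linear_combination e2)
  have h3 : S 3 = -(N - 1) * (N - 3) / 8 := mul_left_cancel₀ hN' (by
    rw [h1, h2] at e3; linear_combination e3)
  have h4 : S 4 = (N ^ 4 - 110 * N ^ 2 + 360 * N - 251) / 720 := mul_left_cancel₀ hN' (by
    rw [h1, h2, h3] at e4; linear_combination e4)
  have h5 : S 5 = (N ^ 4 - 50 * N ^ 2 + 144 * N - 95) / 288 := mul_left_cancel₀ hN' (by
    rw [h1, h2, h3, h4] at e5; linear_combination e5)
  have h6 : S 6 = (-2 * N ^ 6 + 357 * N ^ 4 - 11508 * N ^ 2 + 30240 * N - 19087) / 60480 :=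
    mul_left_cancel₀ hN' (by rw [h1, h2, h3, h4, h5] at e6; linear_combination e6)
  calc ∑ n ∈ Ico 1 N, ((1 - ζ ^ n)⁻¹ * (1 - (1 - ζ ^ n)⁻¹)) ^ 3
      = ∑ n ∈ Ico 1 N, ((1 - ζ ^ n)⁻¹ ^ 3 - 3 * (1 - ζ ^ n)⁻¹ ^ 4
          + 3 * (1 - ζ ^ n)⁻¹ ^ 5 - (1 - ζ ^ n)⁻¹ ^ 6) := sum_congr rfl fun n _ => by ring
    _ = S 3 - 3 * S 4 + 3 * S 5 - S 6 := by
      simp only [hS, sum_sub_distrib, sum_add_distrib, mul_sum]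
    _ = _ := by
      rw [h3, h4, h5, h6]
      ring

end RootsOfUnity

theorem Complex.inv_four_mul_sin_sq (θ : ℂ) (h : Complex.exp (2 * θ * Complex.I) ≠ 1) :
    (4 * Complex.sin θ ^ 2)⁻¹ = (1 - Complex.exp (2 * θ * Complex.I))⁻¹ *
      (1 - (1 - Complex.exp (2 * θ * Complex.I))⁻¹) := by
  have hE : Complex.exp (2 * θ * Complex.I) = Complex.exp (θ * Complex.I) ^ 2 := by
    rw [← Complex.exp_nat_mul]
    ring_nf
  have hsin : Complex.sin θ =
      ((Complex.exp (θ * Complex.I))⁻¹ - Complex.exp (θ * Complex.I)) * Complex.I / 2 := by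
    rw [Complex.sin, neg_mul, Complex.exp_neg]
  have h0 := Complex.exp_ne_zero (θ * Complex.I)
  rw [hsin, hE]
  rw [hE] at h
  generalize Complex.exp (θ * Complex.I) = E at h h0 ⊢
  have h1 : 1 - E ^ 2 ≠ 0 := sub_ne_zero.mpr (Ne.symm h)
  field_simp
  linear_combination 4 * E ^ 2 * Complex.I_sq

theorem sum_inv_sin_pow_six {N : ℕ} (hN : N ≠ 0) :
    ∑ n ∈ Ico 1 N, 1 / sin (n * π / N) ^ 6 =
      ((N : ℝ) ^ 2 - 1) * (2 * N ^ 4 + 23 * N ^ 2 + 191) / 945 := by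
  have hζ := Complex.isPrimitiveRoot_exp N hN
  have term : ∀ n ∈ Ico 1 N, (1 : ℂ) / Complex.sin (n * π / N) ^ 6 =
      64 * ((1 - Complex.exp (2 * π * Complex.I / N) ^ n)⁻¹ *
        (1 - (1 - Complex.exp (2 * π * Complex.I / N) ^ n)⁻¹)) ^ 3 := fun n hn => by
    obtain ⟨hn1, hnN⟩ := mem_Ico.mp hn
    have hpow : Complex.exp (2 * π * Complex.I / N) ^ n =
        Complex.exp (2 * (n * π / N) * Complex.I) := by
      rw [← Complex.exp_nat_mul]
      ring_nf
    have hne := hζ.pow_ne_one_of_pos_of_lt (by omega) hnN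
    rw [hpow] at hne ⊢
    rw [← Complex.inv_four_mul_sin_sq _ hne]
    ring
  apply Complex.ofReal_injective
  push_cast
  rw [sum_congr rfl term, ← mul_sum, hζ.sum_inv_one_sub_mul_pow_three hN]
  ring

theorem verlinde_dim_genus4 (k : ℕ) :
    (((k : ℝ) + 2) / 2) ^ 3 *
      ∑ n ∈ Finset.Icc 1 (k + 1), 1 / (Real.sin (n * Real.pi / (k + 2))) ^ 6
    = (1 / 35) * (((k : ℝ) + 1) * ((k : ℝ) + 2) * ((k : ℝ) + 3) / 6) *
        ((((k : ℝ) + 1) * ((k : ℝ) + 2) * ((k : ℝ) + 3) / 6) *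
            (2 * ((k : ℝ) + 1) * ((k : ℝ) + 2) * ((k : ℝ) + 3) + 27 * ((k : ℝ) + 2)) / 6
          + 6 * ((k : ℝ) + 2) ^ 2) := by
  have h := sum_inv_sin_pow_six (N := k + 2) (by omega)
  push_cast at h
  rw [show Icc 1 (k + 1) = Ico 1 (k + 2) from (Ico_add_one_right_eq_Icc 1 (k + 1)).symm, h]
  ring
end

section
/- Let N be a positive even integer and m an integer with 1 ≤ m ≤ N/2. Then T^t_{2m} = Σ_{s=1}^{m-1} (−1)^{s+1} · ( (N/2)/(N/2+s) ) · C(N/2+s, N/2−s) · 2^{2s} · T^t_{2(m−s)} + (−1)^{m+1} · 2^{2m} · ( (N/2+m−1)! / ( (N/2−m)! · (2m)! ) ) · (N/2) − T_{2m}, where the sum over s is empty when m = 1. -/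
/-!
Put `N = 2M`. The Chebyshev expansion `cos 2Mθ = ∑_{s ≤ M} (-1)^s c(M,s) sin^{2s} θ`, with
`c(M,s) = M/(M+s) · C(M+s, 2s) · 4^s`, gives `cos 2Mθ = (-1)^n` at `θ = nπ/N`. Divide by
`sin^{2m} θ`, multiply by `(-1)^(n+1)` and sum over `n`: the left side becomes `-T_{2m}`, the
terms `s < m` become the twisted sums `T^t_{2(m-s)}`, and the terms `s = m + i` become twisted
sums of `sin^{2i}`. The latter vanish for `0 < i < M`, because `(-1)^n sin^{2i}(nπ/N)` is a
polynomial of degree `< N` without constant term evaluated at `ζ^n`, `ζ` a primitive `N`-th root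
of unity, and they equal `1` for `i = 0`.
-/

open Real Finset

theorem Nat.choose_add_two_add_choose (n r : ℕ) :
    (n + 2).choose (r + 2) + n.choose (r + 2) = 2 * (n + 1).choose (r + 2) + n.choose r := by
  simp only [Nat.choose_succ_succ]
  ring

noncomputable def chebCoeff (M s : ℕ) : ℝ := M / (M + s) * (M + s).choose (2 * s) * 4 ^ s

lemma chebCoeff_of_lt {M s : ℕ} (h : M < s) : chebCoeff M s = 0 := by
  simp [chebCoeff, Nat.choose_eq_zero_of_lt (by omega : M + s < 2 * s)]

lemma chebCoeff_zero {M : ℕ} (hM : M ≠ 0) : chebCoeff M 0 = 1 := by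
  simp [chebCoeff, hM]

lemma chebCoeff_eq_choose_sub {M s : ℕ} (hs : s ≤ M) :
    (M : ℝ) / (M + s) * (M + s).choose (M - s) * 2 ^ (2 * s) = chebCoeff M s := by
  rw [chebCoeff, Nat.choose_symm_of_eq_add (by omega : M + s = M - s + 2 * s), pow_mul]
  norm_num

lemma chebCoeff_eq_factorial {M s : ℕ} (hs : s ≤ M) :
    2 ^ (2 * s) * ((M + s - 1).factorial / ((M - s).factorial * (2 * s).factorial) : ℝ) * M =
      chebCoeff M s := by
  rcases Nat.eq_zero_or_pos (M + s) with h | h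
  · obtain ⟨rfl, rfl⟩ : M = 0 ∧ s = 0 := by omega
    simp [chebCoeff]
  obtain ⟨n, hn⟩ := Nat.exists_eq_add_of_lt h
  rw [zero_add] at hn
  have hnℝ : (M : ℝ) + s = n + 1 := by exact_mod_cast hn
  rw [chebCoeff, Nat.cast_choose ℝ (by omega : 2 * s ≤ M + s),
    show M + s - 2 * s = M - s by omega, hn, Nat.add_sub_cancel, Nat.factorial_succ, pow_mul, hnℝ]
  push_cast
  field_simp
  ring

lemma two_mul_chebCoeff {M s n : ℕ} (h : M + s = n + 1) :
    2 * chebCoeff M s = ((n + 1).choose (2 * s) + n.choose (2 * s)) * 4 ^ s := by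
  rcases le_or_gt (2 * s) (n + 1) with hs | hs
  · have hM : (M : ℝ) = n + 1 - s := by
      have : (M : ℝ) + s = n + 1 := by exact_mod_cast h
      linarith
    have hsucc := Nat.choose_mul_succ_eq n (2 * s)
    rw [← Nat.cast_inj (R := ℝ)] at hsucc
    push_cast [Nat.cast_sub hs] at hsucc
    have hpos : (n : ℝ) + 1 ≠ 0 := by positivity
    rw [chebCoeff, h, hM]
    field_simp
    linear_combination -hsucc
  · simp [chebCoeff, h, Nat.choose_eq_zero_of_lt hs,
      Nat.choose_eq_zero_of_lt (by omega : n < 2 * s)]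

-- Both binomial sequences in `two_mul_chebCoeff` satisfy this recursion, by Pascal's rule.
lemma chebCoeff_add_two_succ (M s : ℕ) :
    chebCoeff (M + 2) (s + 1) =
      2 * chebCoeff (M + 1) (s + 1) + 4 * chebCoeff (M + 1) s - chebCoeff M (s + 1) := by
  have h₁ := two_mul_chebCoeff (M := M + 2) (s := s + 1) (n := M + s + 2) (by ring)
  have h₂ := two_mul_chebCoeff (M := M + 1) (s := s + 1) (n := M + s + 1) (by ring)
  have h₃ := two_mul_chebCoeff (M := M + 1) (s := s) (n := M + s) (by ring)
  have h₄ := two_mul_chebCoeff (M := M) (s := s + 1) (n := M + s) (by ring)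
  have p₁ : ((M + s + 3).choose (2 * s + 2) + (M + s + 1).choose (2 * s + 2) : ℝ) =
      2 * (M + s + 2).choose (2 * s + 2) + (M + s + 1).choose (2 * s) := by
    exact_mod_cast Nat.choose_add_two_add_choose (M + s + 1) (2 * s)
  have p₂ : ((M + s + 2).choose (2 * s + 2) + (M + s).choose (2 * s + 2) : ℝ) =
      2 * (M + s + 1).choose (2 * s + 2) + (M + s).choose (2 * s) := by
    exact_mod_cast Nat.choose_add_two_add_choose (M + s) (2 * s)
  rw [show 2 * (s + 1) = 2 * s + 2 by ring, pow_succ] at *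
  linear_combination (h₁ - 2 * h₂ - 4 * h₃ + h₄ + 4 ^ s * 4 * (p₁ + p₂)) / 2

lemma sum_range_chebCoeff_add_two {M : ℕ} (hM : M ≠ 0) (L : ℕ) (x : ℝ) :
    ∑ s ∈ range (L + 1), (-1) ^ s * chebCoeff (M + 2) s * x ^ s =
      2 * ∑ s ∈ range (L + 1), (-1) ^ s * chebCoeff (M + 1) s * x ^ s
        - 4 * x * ∑ s ∈ range L, (-1) ^ s * chebCoeff (M + 1) s * x ^ s
        - ∑ s ∈ range (L + 1), (-1) ^ s * chebCoeff M s * x ^ s := by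
  simp only [sum_range_succ' _ L, chebCoeff_zero hM, chebCoeff_zero (M.succ_ne_zero),
    chebCoeff_zero (M + 1).succ_ne_zero]
  have tail : ∑ s ∈ range L, (-1) ^ (s + 1) * chebCoeff (M + 2) (s + 1) * x ^ (s + 1) =
      2 * ∑ s ∈ range L, (-1) ^ (s + 1) * chebCoeff (M + 1) (s + 1) * x ^ (s + 1)
        - 4 * x * ∑ s ∈ range L, (-1) ^ s * chebCoeff (M + 1) s * x ^ s
        - ∑ s ∈ range L, (-1) ^ (s + 1) * chebCoeff M (s + 1) * x ^ (s + 1) := by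
    simp only [mul_sum, ← sum_sub_distrib]
    refine sum_congr rfl fun s _ => ?_
    rw [chebCoeff_add_two_succ]
    ring
  rw [tail]
  ring

lemma sum_range_chebCoeff_of_lt {M L : ℕ} (hL : M < L) (f : ℕ → ℝ) :
    ∑ s ∈ range L, (-1) ^ s * chebCoeff M s * f s =
      ∑ s ∈ range (M + 1), (-1) ^ s * chebCoeff M s * f s := by
  refine (sum_subset (range_subset_range.2 hL) fun s _ hs => ?_).symm
  rw [chebCoeff_of_lt (by simpa using hs), mul_zero, zero_mul]

theorem cos_two_mul_eq_sum_chebCoeff {M : ℕ} (hM : M ≠ 0) (θ : ℝ) :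
    cos (2 * M * θ) = ∑ s ∈ range (M + 1), (-1) ^ s * chebCoeff M s * sin θ ^ (2 * s) := by
  -- Any range past the degree will do, so the three expansions in the recursion can share one.
  suffices ∀ K L, K + 1 < L →
      cos (2 * (K + 1 : ℕ) * θ) =
        ∑ s ∈ range L, (-1) ^ s * chebCoeff (K + 1) s * (sin θ ^ 2) ^ s by
    obtain ⟨K, rfl⟩ := Nat.exists_eq_succ_of_ne_zero hM
    simpa [pow_mul] using this K (K + 2) (by omega)
  have cos_two : cos (2 * θ) = 1 - 2 * sin θ ^ 2 := cos_two_mul_eq_one_sub θ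
  intro K
  induction K using Nat.twoStepInduction with
  | zero =>
    intro L hL
    rw [sum_range_chebCoeff_of_lt hL]
    norm_num [sum_range_succ, chebCoeff, cos_two]
    ring
  | one =>
    intro L hL
    have : cos (2 * ((1 + 1 : ℕ) : ℝ) * θ) = 2 * cos (2 * θ) ^ 2 - 1 := by
      rw [← cos_two_mul]; push_cast; ring_nf
    rw [sum_range_chebCoeff_of_lt hL, this]
    norm_num [sum_range_succ, chebCoeff, cos_two]
    ring
  | more K ih₀ ih₁ =>
    intro L hL
    obtain ⟨L, rfl⟩ := Nat.exists_eq_succ_of_ne_zero (by omega : L ≠ 0)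
    rw [sum_range_chebCoeff_add_two K.succ_ne_zero, ← ih₁ _ (by omega), ← ih₁ _ (by omega),
      ← ih₀ _ (by omega)]
    have e₁ : 2 * ((K + 2 + 1 : ℕ) : ℝ) * θ = 2 * ((K + 2 : ℕ) : ℝ) * θ + 2 * θ := by
      push_cast; ring
    have e₂ : 2 * ((K + 1 : ℕ) : ℝ) * θ = 2 * ((K + 2 : ℕ) : ℝ) * θ - 2 * θ := by
      push_cast; ring
    rw [e₁, e₂, cos_add, cos_sub, cos_two]
    ring

lemma cos_two_mul_div_sin_pow_eq {M m : ℕ} (hM : M ≠ 0) (hmM : m ≤ M) {θ : ℝ}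
    (hθ : sin θ ≠ 0) :
    cos (2 * M * θ) / sin θ ^ (2 * m) =
      ∑ s ∈ range m, (-1) ^ s * chebCoeff M s / sin θ ^ (2 * (m - s)) +
        ∑ i ∈ range (M + 1 - m), (-1) ^ (m + i) * chebCoeff M (m + i) * sin θ ^ (2 * i) := by
  rw [cos_two_mul_eq_sum_chebCoeff hM, ← Nat.add_sub_of_le (by omega : m ≤ M + 1),
    sum_range_add, Nat.add_sub_cancel_left, add_div, sum_div, sum_div]
  congr 1 <;> refine sum_congr rfl fun s hs => ?_
  · have hsm : s < m := mem_range.1 hs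
    rw [show 2 * m = 2 * s + 2 * (m - s) by omega, pow_add]
    field_simp
  · rw [mul_add 2 m s, pow_add (sin θ)]
    field_simp

open Polynomial in
theorem IsPrimitiveRoot.sum_range_eval_pow_eq_zero {R : Type*} [CommRing R] [IsDomain R]
    {ζ : R} {N : ℕ} (hζ : IsPrimitiveRoot ζ N) {P : R[X]} (hdeg : P.natDegree < N)
    (h0 : P.coeff 0 = 0) :
    ∑ n ∈ range N, P.eval (ζ ^ n) = 0 := by
  simp only [eval_eq_sum_range]
  rw [sum_comm]
  refine sum_eq_zero fun i hi => ?_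
  rcases Nat.eq_zero_or_pos i with rfl | hi₀
  · simp [h0]
  · have hlt : i < N := (Nat.lt_succ_iff.1 (mem_range.1 hi)).trans_lt hdeg
    have hgeom := geom_sum_mul (ζ ^ i) N
    rw [pow_right_comm, hζ.pow_eq_one, one_pow, sub_self] at hgeom
    have hζi : ζ ^ i - 1 ≠ 0 := sub_ne_zero.2 (hζ.pow_ne_one_of_pos_of_lt hi₀.ne' hlt)
    simp_rw [← mul_sum, pow_right_comm ζ _ i, (mul_eq_zero.1 hgeom).resolve_right hζi, mul_zero]

lemma neg_one_pow_mul_sin_pow_eq_eval {M k : ℕ} (hk : k < M) (n : ℕ) :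
    ((-1) ^ n * Complex.sin (n * π / (2 * M)) ^ (2 * k) : ℂ) =
      (-1 / 4) ^ k * (((Polynomial.X - 1 : Polynomial ℂ) ^ (2 * k) * Polynomial.X ^ (M - k)).eval
        (Complex.exp (2 * π * Complex.I / (2 * M)) ^ n)) := by
  obtain ⟨j, rfl⟩ := Nat.exists_eq_add_of_le hk.le
  have hM : (k : ℂ) + j ≠ 0 := by norm_cast; omega
  have hu : Complex.exp (n * π / (2 * (k + j : ℕ)) * Complex.I) ≠ 0 := Complex.exp_ne_zero _
  have hζ : Complex.exp (2 * π * Complex.I / (2 * (k + j : ℕ))) ^ n =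
      Complex.exp (n * π / (2 * (k + j : ℕ)) * Complex.I) ^ 2 := by
    rw [← Complex.exp_nat_mul, ← Complex.exp_nat_mul]; ring_nf
  have hsign :
      (-1 : ℂ) ^ n = Complex.exp (n * π / (2 * (k + j : ℕ)) * Complex.I) ^ (2 * (k + j)) := by
    rw [← Complex.exp_nat_mul, ← Complex.exp_pi_mul_I, ← Complex.exp_nat_mul]
    congr 1
    push_cast
    field_simp
  have hsin : Complex.sin (n * π / (2 * (k + j : ℕ))) =
      ((Complex.exp (n * π / (2 * (k + j : ℕ)) * Complex.I))⁻¹ -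
        Complex.exp (n * π / (2 * (k + j : ℕ)) * Complex.I)) * Complex.I / 2 := by
    rw [Complex.sin, ← Complex.exp_neg, neg_mul]
  generalize Complex.exp (n * π / (2 * (k + j : ℕ)) * Complex.I) = u at *
  simp only [Polynomial.eval_mul, Polynomial.eval_pow, Polynomial.eval_sub, Polynomial.eval_X,
    Polynomial.eval_one, hζ, hsign, hsin, Nat.add_sub_cancel_left]
  have hsq : ((u⁻¹ - u) * Complex.I / 2) ^ 2 = -1 / 4 * ((u ^ 2 - 1) ^ 2 / u ^ 2) := by
    rw [div_pow, mul_pow, Complex.I_sq]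
    field_simp
    ring
  rw [pow_mul ((u⁻¹ - u) * Complex.I / 2), hsq, pow_mul (u ^ 2 - 1), pow_mul u,
    pow_add, mul_pow, div_pow, div_pow]
  field_simp

open Polynomial in
lemma sum_range_neg_one_pow_mul_sin_pow_eq_zero {M k : ℕ} (hk : k < M) :
    ∑ n ∈ range (2 * M), (-1) ^ n * sin (n * π / (2 * M)) ^ (2 * k) = 0 := by
  have hζ := Complex.isPrimitiveRoot_exp (2 * M) (by omega)
  push_cast at hζ
  have hdeg : ((X - 1 : ℂ[X]) ^ (2 * k) * X ^ (M - k)).natDegree < 2 * M := by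
    calc _ ≤ 2 * k + (M - k) := by compute_degree
      _ < 2 * M := by omega
  have h0 : ((X - 1 : ℂ[X]) ^ (2 * k) * X ^ (M - k)).coeff 0 = 0 := by
    simp [coeff_zero_eq_eval_zero, Nat.sub_ne_zero_of_lt hk]
  have hsum := hζ.sum_range_eval_pow_eq_zero hdeg h0
  have hsumℂ :
      ∑ n ∈ range (2 * M), ((-1) ^ n * Complex.sin (n * π / (2 * M)) ^ (2 * k) : ℂ) = 0 := by
    simp_rw [neg_one_pow_mul_sin_pow_eq_eval hk, ← mul_sum, hsum, mul_zero]
  exact_mod_cast hsumℂ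

lemma sum_Icc_neg_one_pow_mul_sin_pow_eq {M k : ℕ} (hk : k < M) :
    ∑ n ∈ Icc 1 (2 * M - 1), (-1) ^ (n + 1) * sin (n * π / (2 * M : ℕ)) ^ (2 * k) =
      if k = 0 then 1 else 0 := by
  push_cast
  have h := sum_range_neg_one_pow_mul_sin_pow_eq_zero hk
  rw [sum_range_eq_add_Ico _ (by omega)] at h
  rw [Icc_sub_one_right_eq_Ico_of_not_isMin (by simp; omega)]
  simp_rw [pow_succ, mul_neg_one, neg_mul, sum_neg_distrib]
  split_ifs with hk0 <;> simp [hk0] at h ⊢ <;> linarith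

/-- `cscPowSum N k` is `T_{2k}` and `twistedCscPowSum N k` is `T^t_{2k}`. -/
noncomputable def cscPowSum (N k : ℕ) : ℝ :=
  ∑ n ∈ Icc 1 (N - 1), 1 / sin (n * π / N) ^ (2 * k)

noncomputable def twistedCscPowSum (N k : ℕ) : ℝ :=
  ∑ n ∈ Icc 1 (N - 1), (-1) ^ (n + 1) / sin (n * π / N) ^ (2 * k)

lemma sin_nat_mul_pi_div_pos {N n : ℕ} (hn : n ∈ Icc 1 (N - 1)) : 0 < sin (n * π / N) := by
  obtain ⟨h₁, h₂⟩ := mem_Icc.1 hn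
  have hN : (0 : ℝ) < N := by exact_mod_cast (by omega : 0 < N)
  have hnN : (n : ℝ) < N := by exact_mod_cast (by omega : n < N)
  refine sin_pos_of_pos_of_lt_pi (by positivity) ?_
  rw [div_lt_iff₀ hN]
  nlinarith [pi_pos]

theorem neg_cscPowSum_eq {M m : ℕ} (hm : m ≠ 0) (hmM : m ≤ M) :
    -cscPowSum (2 * M) m =
      ∑ s ∈ range m, (-1) ^ s * chebCoeff M s * twistedCscPowSum (2 * M) (m - s) +
        (-1) ^ m * chebCoeff M m := by
  have hM : M ≠ 0 := by omega
  have key : ∀ n ∈ Icc 1 (2 * M - 1), -(1 / sin (n * π / (2 * M : ℕ)) ^ (2 * m)) =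
      ∑ s ∈ range m, (-1) ^ s * chebCoeff M s *
          ((-1) ^ (n + 1) / sin (n * π / (2 * M : ℕ)) ^ (2 * (m - s))) +
        ∑ i ∈ range (M + 1 - m), (-1) ^ (m + i) * chebCoeff M (m + i) *
          ((-1) ^ (n + 1) * sin (n * π / (2 * M : ℕ)) ^ (2 * i)) := by
    intro n hn
    have hcos : cos (2 * M * (n * π / (2 * M : ℕ))) = (-1) ^ n := by
      rw [Nat.cast_mul, Nat.cast_two, mul_div_cancel₀ _ (by positivity), cos_nat_mul_pi]
    calc -(1 / sin (n * π / (2 * M : ℕ)) ^ (2 * m))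
        = (-1) ^ (n + 1) *
            (cos (2 * M * (n * π / (2 * M : ℕ))) / sin (n * π / (2 * M : ℕ)) ^ (2 * m)) := by
          rw [hcos, ← mul_div_assoc, ← pow_add, Odd.neg_one_pow ⟨n, by ring⟩, neg_div]
      _ = _ := by
          rw [cos_two_mul_div_sin_pow_eq hM hmM (sin_nat_mul_pi_div_pos hn).ne', mul_add, mul_sum,
            mul_sum]
          congr 1 <;> exact sum_congr rfl fun _ _ => by ring
  rw [cscPowSum, ← sum_neg_distrib, sum_congr rfl key, sum_add_distrib, sum_comm,
    sum_comm (s := Icc _ _)]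
  simp_rw [← mul_sum]
  refine congrArg₂ (· + ·) rfl ?_
  rw [sum_congr rfl fun i hi => by
    rw [sum_Icc_neg_one_pow_mul_sin_pow_eq (by rw [mem_range] at hi; omega)]]
  simp [hmM]

theorem twisted_T2m_recursion_general (N m : ℕ) (hNeven : Even N)
    (hm : 1 ≤ m) (hmN : m ≤ N / 2) :
    (∑ n ∈ Finset.Icc 1 (N - 1), (-1 : ℝ) ^ (n + 1) / (Real.sin (n * Real.pi / N)) ^ (2 * m))
    = (∑ s ∈ Finset.Icc 1 (m - 1),
        (-1 : ℝ) ^ (s + 1) * (((N / 2 : ℕ) : ℝ) / (((N / 2 : ℕ) : ℝ) + s)) *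
          (Nat.choose (N / 2 + s) (N / 2 - s)) * 2 ^ (2 * s) *
          (∑ n ∈ Finset.Icc 1 (N - 1), (-1 : ℝ) ^ (n + 1) /
            (Real.sin (n * Real.pi / N)) ^ (2 * (m - s))))
      + (-1 : ℝ) ^ (m + 1) * 2 ^ (2 * m) *
          ((Nat.factorial (N / 2 + m - 1) : ℝ) /
            ((Nat.factorial (N / 2 - m) : ℝ) * (Nat.factorial (2 * m) : ℝ))) * ((N / 2 : ℕ) : ℝ)
      - ∑ n ∈ Finset.Icc 1 (N - 1), 1 / (Real.sin (n * Real.pi / N)) ^ (2 * m) := by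
  obtain ⟨M, rfl⟩ := hNeven.two_dvd
  rw [Nat.mul_div_cancel_left M two_pos] at hmN ⊢
  have h := neg_cscPowSum_eq (by omega : m ≠ 0) hmN
  rw [range_eq_Ico, sum_eq_sum_Ico_succ_bot (by omega), chebCoeff_zero (by omega),
    ← Icc_sub_one_right_eq_Ico_of_not_isMin (by simp; omega)] at h
  simp only [pow_zero, one_mul, Nat.sub_zero, zero_add] at h
  have hsum : ∑ s ∈ Icc 1 (m - 1), (-1 : ℝ) ^ (s + 1) * ((M : ℝ) / (M + s)) *
      (M + s).choose (M - s) * 2 ^ (2 * s) * twistedCscPowSum (2 * M) (m - s) =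
      -∑ s ∈ Icc 1 (m - 1), (-1) ^ s * chebCoeff M s * twistedCscPowSum (2 * M) (m - s) := by
    rw [← sum_neg_distrib]
    refine sum_congr rfl fun s hs => ?_
    rw [← chebCoeff_eq_choose_sub (by simp at hs; omega)]
    ring
  simp only [twistedCscPowSum, cscPowSum] at h hsum
  rw [hsum]
  linear_combination -h + (-1) ^ m * chebCoeff_eq_factorial hmN

theorem twisted_T2m_recursion (N m : ℕ) (hN : 0 < N) (hNeven : Even N)
    (hm : 1 ≤ m) (hmN : m ≤ N / 2) :
    (∑ n ∈ Finset.Icc 1 (N - 1), (-1 : ℝ) ^ (n + 1) / (Real.sin (n * Real.pi / N)) ^ (2 * m))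
    = (∑ s ∈ Finset.Icc 1 (m - 1),
        (-1 : ℝ) ^ (s + 1) * (((N / 2 : ℕ) : ℝ) / (((N / 2 : ℕ) : ℝ) + s)) *
          (Nat.choose (N / 2 + s) (N / 2 - s)) * 2 ^ (2 * s) *
          (∑ n ∈ Finset.Icc 1 (N - 1), (-1 : ℝ) ^ (n + 1) /
            (Real.sin (n * Real.pi / N)) ^ (2 * (m - s))))
      + (-1 : ℝ) ^ (m + 1) * 2 ^ (2 * m) *
          ((Nat.factorial (N / 2 + m - 1) : ℝ) /
            ((Nat.factorial (N / 2 - m) : ℝ) * (Nat.factorial (2 * m) : ℝ))) * ((N / 2 : ℕ) : ℝ)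
      - ∑ n ∈ Finset.Icc 1 (N - 1), 1 / (Real.sin (n * Real.pi / N)) ^ (2 * m) :=
  twisted_T2m_recursion_general N m hNeven hm hmN
end

section
/- For every positive even integer N, one has Σ_{n=1}^{N-1} (−1)^{n+1} / sin⁴(n π/N) = ( 7N⁴ + 40N² + 88 ) / 360. -/
/-!
Put `ω = e^{2iθ}`, so that `(ω - 1)⁴ = 16 ω² sin⁴ θ`. For the polynomial
`c(x) = x (x - N) (x (x - N) - 2)`, four summations by parts give
`Σ_{k<N} c(k) ωᵏ = -24 N ω² / (ω - 1)⁴` for every `N`-th root of unity `ω ≠ 1`,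
so `1 / sin⁴ (nπ/N)` is, up to the factor `-2/(3N)`, the discrete Fourier transform of `c`
at `ζⁿ`, `ζ = e^{2πi/N}`. For `N = 2M` the sign `(-1)ⁿ` is the character `ζ^{nM}`, and
orthogonality of characters turns the twisted sum into `(2/(3N)) (N c(M) - Σ_{k<N} c(k))`,
where the remaining sum is a Faulhaber polynomial in `N`.
-/

open Real Finset

open fwdDiff in
theorem sub_one_mul_sum_range_mul_pow {R : Type*} [CommRing R] {ω : R} {N : ℕ}
    (hω : ω ^ N = 1) (f : R → R) :
    (ω - 1) * ∑ k ∈ range N, f k * ω ^ k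
      = f N - f 0 - ω * ∑ k ∈ range N, Δ_[1] f k * ω ^ k := by
  have hshift : ∑ k ∈ range N, f ↑(k + 1) * ω ^ (k + 1) + f 0
      = ∑ k ∈ range N, f k * ω ^ k + f N := by
    simpa [hω] using (sum_range_succ' (fun k : ℕ => f k * ω ^ k) N).symm.trans
      (sum_range_succ _ N)
  have hmul : ω * ∑ k ∈ range N, f (k + 1) * ω ^ k
      = ∑ k ∈ range N, f ↑(k + 1) * ω ^ (k + 1) := by
    rw [mul_sum]; refine sum_congr rfl fun k _ => ?_; push_cast; ring
  simp only [fwdDiff, sub_mul, sum_sub_distrib, mul_sub, hmul]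
  linear_combination hshift

section RootsOfUnity

variable {K : Type*} [CommRing K] [IsDomain K] {ζ : K}

theorem IsPrimitiveRoot.geom_sum_pow_eq_ite {N : ℕ} (hζ : IsPrimitiveRoot ζ N) (j : ℕ) :
    ∑ n ∈ range N, (ζ ^ j) ^ n = if N ∣ j then (N : K) else 0 := by
  split_ifs with h
  · obtain ⟨m, rfl⟩ := h
    simp [pow_mul, hζ.pow_eq_one]
  · have h1 : ζ ^ j ≠ 1 := by rwa [Ne, hζ.pow_eq_one_iff_dvd]
    have hroot : (ζ ^ j) ^ N = 1 := by rw [pow_right_comm, hζ.pow_eq_one, one_pow]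
    have hgeom := geom_sum_mul (ζ ^ j) N
    rw [hroot, sub_self] at hgeom
    exact (mul_eq_zero.1 hgeom).resolve_right (sub_ne_zero.2 h1)

theorem IsPrimitiveRoot.sum_pow_mul_sum_mul_pow {N : ℕ} (hζ : IsPrimitiveRoot ζ N) (c : ℕ → K)
    {a b : ℕ} (hb : b < N) (hab : N ∣ a + b) :
    ∑ n ∈ range N, (ζ ^ n) ^ a * ∑ k ∈ range N, c k * (ζ ^ n) ^ k = N * c b := by
  have hunique : ∀ k < N, N ∣ a + k → k = b := fun k hk hak =>
    (Nat.ModEq.add_left_cancel' a ((Nat.modEq_zero_iff_dvd.2 hak).trans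
      (Nat.modEq_zero_iff_dvd.2 hab).symm)).eq_of_lt_of_lt hk hb
  calc ∑ n ∈ range N, (ζ ^ n) ^ a * ∑ k ∈ range N, c k * (ζ ^ n) ^ k
      = ∑ k ∈ range N, c k * ∑ n ∈ range N, (ζ ^ (a + k)) ^ n := by
        simp_rw [mul_sum]
        rw [sum_comm]
        refine sum_congr rfl fun k _ => sum_congr rfl fun n _ => ?_
        ring
    _ = ∑ k ∈ range N, c k * if N ∣ a + k then (N : K) else 0 := by
        simp_rw [hζ.geom_sum_pow_eq_ite]
    _ = N * c b := by
        rw [sum_eq_single_of_mem b (mem_range.2 hb), if_pos hab, mul_comm]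
        intro k hk hkb
        rw [if_neg fun h => hkb (hunique k (mem_range.1 hk) h), mul_zero]

theorem IsPrimitiveRoot.pow_eq_neg_one_of_add_self {M : ℕ} (hζ : IsPrimitiveRoot ζ (M + M))
    (hM : M ≠ 0) : ζ ^ M = -1 := by
  have h := hζ.pow_of_dvd hM ⟨2, by omega⟩
  rw [Nat.div_eq_of_eq_mul_left (by omega) (by omega : M + M = 2 * M)] at h
  exact h.eq_neg_one_of_two_right

end RootsOfUnity

/-- Up to an additive constant this is `N⁴ B₄(x/N) - 2 N² B₂(x/N)` (Bernoulli polynomials), so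
`c(x + N) - c(x) = 4N (x - 1) x (x + 1)`: the boundary terms `Δⁱc(N) - Δⁱc(0)` of the summations
by parts are `0, 0, 24N, 24N`. -/
def cscFourCoeff {R : Type*} [CommRing R] (N : ℕ) (x : R) : R :=
  x * (x - N) * (x * (x - N) - 2)

open fwdDiff in
theorem sub_one_pow_four_mul_sum_cscFourCoeff {K : Type*} [Field K] {ω : K} {N : ℕ}
    (hω : ω ^ N = 1) (hω1 : ω ≠ 1) :
    (ω - 1) ^ 4 * ∑ k ∈ range N, cscFourCoeff N (k : K) * ω ^ k = -24 * N * ω ^ 2 := by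
  set c : K → K := cscFourCoeff N
  have h0 := sub_one_mul_sum_range_mul_pow hω c
  have h1 := sub_one_mul_sum_range_mul_pow hω (Δ_[1] c)
  have h2 := sub_one_mul_sum_range_mul_pow hω (Δ_[1] (Δ_[1] c))
  have h3 := sub_one_mul_sum_range_mul_pow hω (Δ_[1] (Δ_[1] (Δ_[1] c)))
  have hΔ4 : ∑ k ∈ range N, Δ_[1] (Δ_[1] (Δ_[1] (Δ_[1] c))) k * ω ^ k = 0 := by
    have : ∀ x, Δ_[1] (Δ_[1] (Δ_[1] (Δ_[1] c))) x = 24 := fun x => by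
      simp only [c, fwdDiff, cscFourCoeff]; ring
    simp only [this, ← mul_sum, geom_sum_eq hω1, hω, sub_self, zero_div, mul_zero]
  have hB0 : c N - c 0 = 0 := by simp only [c, cscFourCoeff]; ring
  have hB1 : Δ_[1] c N - Δ_[1] c 0 = 0 := by simp only [c, fwdDiff, cscFourCoeff]; ring
  have hB2 : Δ_[1] (Δ_[1] c) N - Δ_[1] (Δ_[1] c) 0 = 24 * N := by
    simp only [c, fwdDiff, cscFourCoeff]; ring
  have hB3 : Δ_[1] (Δ_[1] (Δ_[1] c)) N - Δ_[1] (Δ_[1] (Δ_[1] c)) 0 = 24 * N := by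
    simp only [c, fwdDiff, cscFourCoeff]; ring
  linear_combination (ω - 1) ^ 3 * (h0 + hB0) - ω * (ω - 1) ^ 2 * (h1 + hB1)
    + ω ^ 2 * (ω - 1) * (h2 + hB2) - ω ^ 3 * (h3 + hB3) + ω ^ 4 * hΔ4

theorem thirty_mul_sum_range_cscFourCoeff {R : Type*} [CommRing R] (N : ℕ) :
    30 * ∑ k ∈ range N, cscFourCoeff N (k : R) = N ^ 5 + 10 * N ^ 3 - 11 * N := by
  have faulhaber : ∀ n : ℕ, 30 * ∑ k ∈ range n, cscFourCoeff N (k : R)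
      = 6 * n ^ 5 - 15 * (N + 1) * n ^ 4 + (10 * N ^ 2 + 30 * N - 10) * n ^ 3
        - (15 * N ^ 2 - 15 * N - 30) * n ^ 2 + (5 * N ^ 2 - 30 * N - 11) * n := by
    intro n
    induction n with
    | zero => simp
    | succ n ih => rw [sum_range_succ, mul_add, ih, cscFourCoeff]; push_cast; ring
  rw [faulhaber]; ring

namespace Complex

theorem exp_two_mul_I_sub_one_pow_four (x : ℂ) :
    (exp (2 * x * I) - 1) ^ 4 = 16 * exp (2 * x * I) ^ 2 * sin x ^ 4 := by
  set a := exp (x * I)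
  set b := exp (-x * I)
  have hsq : exp (2 * x * I) = a ^ 2 := by rw [← exp_nat_mul]; ring_nf
  have hinv : a * b = 1 := by rw [← exp_add]; simp
  have hfactor : a ^ 2 - 1 = a * (a - b) := by linear_combination hinv
  rw [sin, hsq, hfactor]
  -- the right side is now `a⁴ (b - a)⁴ I⁴`
  linear_combination (-(a ^ 4 * (a - b) ^ 4 * (I ^ 2 - 1))) * I_sq

theorem one_div_sin_pow_four_eq_sum_cscFourCoeff {x : ℂ} {N : ℕ} (hN : N ≠ 0)
    (hω : exp (2 * x * I) ^ N = 1) (hω1 : exp (2 * x * I) ≠ 1) :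
    1 / sin x ^ 4
      = -2 / (3 * N) * ∑ k ∈ range N, cscFourCoeff N (k : ℂ) * exp (2 * x * I) ^ k := by
  have hkey := sub_one_pow_four_mul_sum_cscFourCoeff hω hω1
  rw [exp_two_mul_I_sub_one_pow_four] at hkey
  have hω0 : (16 : ℂ) * exp (2 * x * I) ^ 2 ≠ 0 := by simp [exp_ne_zero]
  have hsum : sin x ^ 4 * ∑ k ∈ range N, cscFourCoeff N (k : ℂ) * exp (2 * x * I) ^ k
      = -3 / 2 * N := mul_left_cancel₀ hω0 (by linear_combination hkey)
  have hsin : sin x ≠ 0 := fun h => hN (by simpa [h] using hsum)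
  have hN' : (N : ℂ) ≠ 0 := Nat.cast_ne_zero.2 hN
  field_simp
  linear_combination 2 * hsum

theorem one_div_sin_nat_mul_pi_div_pow_four {N n : ℕ} (hn : 0 < n) (hnN : n < N) :
    1 / sin (n * π / N) ^ 4
      = -2 / (3 * N)
        * ∑ k ∈ range N, cscFourCoeff N (k : ℂ) * (exp (2 * π * I / N) ^ n) ^ k := by
  have hζ := isPrimitiveRoot_exp N (by omega)
  have hx : exp (2 * (n * π / N) * I) = exp (2 * π * I / N) ^ n := by
    rw [← exp_nat_mul]; ring_nf
  rw [← hx]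
  refine one_div_sin_pow_four_eq_sum_cscFourCoeff (by omega) ?_ ?_ <;> rw [hx]
  · rw [pow_right_comm, hζ.pow_eq_one, one_pow]
  · exact hζ.pow_ne_one_of_pos_of_lt hn.ne' hnN

end Complex

theorem twisted_T4 (N : ℕ) (hN : 0 < N) (hNeven : Even N) :
    ∑ n ∈ Finset.Icc 1 (N - 1), (-1 : ℝ) ^ (n + 1) / (Real.sin (n * Real.pi / N)) ^ 4
    = (7 * (N : ℝ) ^ 4 + 40 * (N : ℝ) ^ 2 + 88) / 360 := by
  obtain ⟨M, hM⟩ := hNeven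
  set ζ := Complex.exp (2 * π * Complex.I / N)
  have hζ : IsPrimitiveRoot ζ N := Complex.isPrimitiveRoot_exp N hN.ne'
  have hζM : ζ ^ M = -1 := (hM ▸ hζ).pow_eq_neg_one_of_add_self (by omega)
  have hterm : ∀ n ∈ Icc 1 (N - 1), (-1 : ℂ) ^ (n + 1) / Complex.sin (n * π / N) ^ 4
      = 2 / (3 * N) * ((ζ ^ n) ^ M * ∑ k ∈ range N, cscFourCoeff N (k : ℂ) * (ζ ^ n) ^ k) := by
    intro n hn
    obtain ⟨hn1, hnN⟩ := mem_Icc.1 hn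
    rw [div_eq_mul_one_div, Complex.one_div_sin_nat_mul_pi_div_pow_four (by omega) (by omega),
      pow_right_comm, hζM]
    ring
  have hIcc : Icc 1 (N - 1) = (range N).erase 0 := by
    ext; simp only [mem_Icc, mem_erase, mem_range]; omega
  apply Complex.ofReal_injective
  push_cast
  rw [sum_congr rfl hterm, ← mul_sum, hIcc, sum_erase_eq_sub (mem_range.2 hN),
    hζ.sum_pow_mul_sum_mul_pow _ (b := M) (by omega) ⟨1, by omega⟩]
  simp only [pow_zero, one_pow, mul_one, one_mul]
  have hsum := thirty_mul_sum_range_cscFourCoeff (R := ℂ) N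
  have hM' : (M : ℂ) ≠ 0 := Nat.cast_ne_zero.2 (by omega)
  generalize ∑ k ∈ range N, cscFourCoeff N (k : ℂ) = S at hsum ⊢
  subst hM
  push_cast [cscFourCoeff] at hsum ⊢
  field_simp
  linear_combination -24 * hsum
end

section
/- For every integer N ≥ 1, one has Σ_{n=1}^{N-1} 1 / ( 1 − (2/3) cos²( n π/(2N) ) ) = −2 + 6N (2−√3)^{2N} / ( √3 ( 1 − (2−√3)^{2N} ) ) + √3 · N. -/
/-!
With `θ = nπ/N` the summand is `3 / (2 - cos θ)`. The reflection `θ ↦ 2π - θ` folds the sum into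
the full sum over all `2N`-th roots of unity `z = e^{iθ}`, and with `t = 2 - √3` one has
`√3 / (2 - cos θ) = (1 - t²) / |1 - t z|²`, a value of the discrete Poisson kernel. Its partial
fractions `1 / (1 - t z) + 1 / (1 - t z̄) - 1`, summed over the `M`-th roots of unity by
`∑ 1 / (1 - t ζ^k) = M / (1 - t^M)`, give `M (1 + t^M) / (1 - t^M)`.
-/

open Real Finset

theorem IsPrimitiveRoot.sum_pow_pow_eq_zero {K : Type*} [Field K] {ζ : K} {M j : ℕ}
    (hζ : IsPrimitiveRoot ζ M) (hj₀ : 0 < j) (hjM : j < M) :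
    ∑ k ∈ range M, (ζ ^ j) ^ k = 0 := by
  have hζj : ζ ^ j ≠ 1 := hζ.pow_ne_one_of_pos_of_lt hj₀.ne' hjM
  rw [geom_sum_eq hζj, ← pow_mul, mul_comm, pow_mul, hζ.pow_eq_one, one_pow, sub_self, zero_div]

theorem IsPrimitiveRoot.sum_inv_one_sub_mul_pow {K : Type*} [Field K] {ζ : K} {M : ℕ}
    (hζ : IsPrimitiveRoot ζ M) {w : K} (hw : w ^ M ≠ 1) :
    ∑ k ∈ range M, (1 - w * ζ ^ k)⁻¹ = M / (1 - w ^ M) := by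
  have hM : 0 < M := Nat.pos_of_ne_zero fun h => hw (by simp [h])
  have hw' : 1 - w ^ M ≠ 0 := sub_ne_zero.mpr (Ne.symm hw)
  -- `(w ζ ^ k) ^ M = w ^ M`, so each term is a geometric sum divided by `1 - w ^ M`
  have hterm : ∀ k, (1 - w * ζ ^ k)⁻¹ = (∑ j ∈ range M, w ^ j * (ζ ^ j) ^ k) / (1 - w ^ M) := by
    intro k
    have hgeom := mul_neg_geom_sum (w * ζ ^ k) M
    rw [mul_pow, ← pow_mul, mul_comm k, pow_mul, hζ.pow_eq_one, one_pow, mul_one] at hgeom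
    rw [eq_div_iff hw', ← hgeom, inv_mul_cancel_left₀ (left_ne_zero_of_mul (hgeom ▸ hw'))]
    simp only [mul_pow, ← pow_mul, mul_comm]
  rw [sum_congr rfl fun k _ => hterm k, ← sum_div, sum_comm]
  simp only [← mul_sum]
  rw [sum_eq_single 0]
  · simp
  · intro j hj hj0
    rw [hζ.sum_pow_pow_eq_zero (Nat.pos_of_ne_zero hj0) (mem_range.mp hj), mul_zero]
  · simp [hM]

theorem one_sub_sq_div_eq_inv_add_inv {K : Type*} [Field K] {t z : K} (hz : z ≠ 0)
    (h₁ : 1 - t * z ≠ 0) (h₂ : 1 - t * z⁻¹ ≠ 0) :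
    (1 - t ^ 2) / (1 - t * (z + z⁻¹) + t ^ 2) = (1 - t * z)⁻¹ + (1 - t * z⁻¹)⁻¹ - 1 := by
  have hzw : z * z⁻¹ = 1 := mul_inv_cancel₀ hz
  generalize z⁻¹ = w at *
  rw [show 1 - t * (z + w) + t ^ 2 = (1 - t * z) * (1 - t * w) by linear_combination (-t ^ 2) * hzw]
  field_simp
  linear_combination t ^ 2 * hzw

theorem sum_range_poisson_kernel {M : ℕ} {t : ℝ} (ht : t ^ M ≠ 1) :
    ∑ k ∈ range M, (1 - t ^ 2) / (1 - 2 * t * cos (2 * π * k / M) + t ^ 2)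
      = M * (1 + t ^ M) / (1 - t ^ M) := by
  have hM : M ≠ 0 := fun h => ht (by simp [h])
  set ζ : ℂ := Complex.exp (2 * π * Complex.I / M)
  have hζ : IsPrimitiveRoot ζ M := Complex.isPrimitiveRoot_exp M hM
  have htC : (t : ℂ) ^ M ≠ 1 := by exact_mod_cast ht
  have hne : ∀ {ξ : ℂ}, IsPrimitiveRoot ξ M → ∀ k, 1 - t * ξ ^ k ≠ 0 := by
    intro ξ hξ k h
    have hpow : ((t : ℂ) * ξ ^ k) ^ M = (t : ℂ) ^ M := by
      rw [mul_pow, ← pow_mul, mul_comm k, pow_mul, hξ.pow_eq_one, one_pow, mul_one]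
    rw [← sub_eq_zero.mp h, one_pow] at hpow
    exact htC hpow.symm
  have hcos : ∀ k : ℕ, 2 * Complex.cos (2 * π * k / M) = ζ ^ k + (ζ ^ k)⁻¹ := by
    intro k
    rw [← Complex.exp_nat_mul, ← Complex.exp_neg, Complex.two_cos]
    ring_nf
  apply Complex.ofReal_injective
  push_cast
  calc ∑ k ∈ range M, (1 - (t : ℂ) ^ 2) / (1 - 2 * t * Complex.cos (2 * π * k / M) + t ^ 2)
      = ∑ k ∈ range M, ((1 - t * ζ ^ k)⁻¹ + (1 - t * ζ⁻¹ ^ k)⁻¹ - 1) := by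
        refine sum_congr rfl fun k _ => ?_
        rw [inv_pow, ← one_sub_sq_div_eq_inv_add_inv (pow_ne_zero _ (hζ.ne_zero hM)) (hne hζ k)
          (by simpa using hne hζ.inv k), ← hcos k]
        ring_nf
    _ = M / (1 - t ^ M) + M / (1 - t ^ M) - M := by
        rw [sum_sub_distrib, sum_add_distrib, hζ.sum_inv_one_sub_mul_pow htC,
          hζ.inv.sum_inv_one_sub_mul_pow htC]
        simp
    _ = M * (1 + t ^ M) / (1 - t ^ M) := by
        field_simp [sub_ne_zero.mpr htC.symm]
        ring

theorem sum_range_inv_sub_cos (M : ℕ) {a : ℝ} (ha : 1 < a) :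
    ∑ k ∈ range M, 1 / (a - cos (2 * π * k / M))
      = M * (1 + (a - √(a ^ 2 - 1)) ^ M) / (√(a ^ 2 - 1) * (1 - (a - √(a ^ 2 - 1)) ^ M)) := by
  rcases eq_or_ne M 0 with rfl | hM
  · simp
  set s := √(a ^ 2 - 1)
  set t := a - s
  have hs : 0 < s := Real.sqrt_pos.mpr (by nlinarith)
  have hs2 : s ^ 2 = a ^ 2 - 1 := Real.sq_sqrt (by nlinarith)
  have ht₀ : 0 < t := by nlinarith
  have ht₁ : t < 1 := by nlinarith
  have hkernel : ∀ c, c ≤ 1 → 1 / (a - c) = (1 - t ^ 2) / (1 - 2 * t * c + t ^ 2) / s := by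
    intro c hc
    have hac : a - c ≠ 0 := by linarith
    -- `t` is the smaller root of `X ^ 2 - 2 a X + 1`, whose discriminant is `(2 s) ^ 2`
    rw [show 1 - 2 * t * c + t ^ 2 = 2 * t * (a - c) by linear_combination hs2,
      show 1 - t ^ 2 = 2 * t * s by linear_combination hs2]
    field_simp
  have htM : t ^ M ≠ 1 := (pow_lt_one₀ ht₀.le ht₁ hM).ne
  rw [sum_congr rfl fun k _ => hkernel _ (cos_le_one _), ← sum_div, sum_range_poisson_kernel htM]
  field_simp

theorem Finset.sum_range_two_mul_eq_of_reflect {M : Type*} [AddCommMonoid M] {N : ℕ} (hN : 1 ≤ N)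
    (f : ℕ → M) (hf : ∀ k ≤ N, f (2 * N - k) = f k) :
    ∑ k ∈ range (2 * N), f k = f 0 + f N + 2 • ∑ k ∈ Icc 1 (N - 1), f k := by
  obtain ⟨m, rfl⟩ : ∃ m, N = m + 1 := ⟨N - 1, by omega⟩
  have hupper : ∑ k ∈ range (m + 1), f (m + 1 + k) = ∑ k ∈ range (m + 1), f (k + 1) := by
    rw [← sum_range_reflect]
    refine sum_congr rfl fun k hk => ?_
    have hk : k < m + 1 := mem_range.mp hk
    rw [← hf (k + 1) (by omega)]
    congr 1
    omega
  have hIcc : ∑ k ∈ range m, f (k + 1) = ∑ k ∈ Icc 1 m, f k := by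
    rw [range_eq_Ico, sum_Ico_add' f, zero_add, Ico_add_one_right_eq_Icc]
  rw [two_mul, sum_range_add, hupper, sum_range_succ', sum_range_succ, hIcc, Nat.add_sub_cancel,
    two_nsmul]
  abel

theorem kirchhoff_index_sum_2xN (N : ℕ) (hN : 1 ≤ N) :
    ∑ n ∈ Finset.Icc 1 (N - 1),
      1 / (1 - (2 / 3) * (Real.cos (n * Real.pi / (2 * N))) ^ 2)
    = -2 + 6 * (N : ℝ) * (2 - Real.sqrt 3) ^ (2 * N) /
        (Real.sqrt 3 * (1 - (2 - Real.sqrt 3) ^ (2 * N))) +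
      Real.sqrt 3 * N := by
  set f : ℕ → ℝ := fun n => 1 / (2 - cos (2 * π * n / (2 * N : ℕ)))
  have hsummand : ∀ n : ℕ, 1 / (1 - 2 / 3 * cos (n * π / (2 * N)) ^ 2) = 3 * f n := by
    intro n
    rw [cos_sq, show 2 * (n * π / (2 * N)) = 2 * π * n / (2 * N : ℕ) by push_cast; ring]
    field_simp
    ring
  have hreflect : ∀ k ≤ N, f (2 * N - k) = f k := by
    intro k hk
    simp only [f, Nat.cast_sub (show k ≤ 2 * N by omega)]
    rw [mul_sub, sub_div, mul_div_assoc, div_self (by positivity), mul_one, cos_two_pi_sub]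
  have hf₀ : f 0 = 1 := by norm_num [f]
  have hf_N : f N = 1 / 3 := by
    simp only [f]
    rw [show 2 * π * N / (2 * N : ℕ) = π by push_cast; field_simp, cos_pi]
    norm_num
  have hclosed := sum_range_inv_sub_cos (2 * N) one_lt_two
  rw [sum_range_two_mul_eq_of_reflect hN f hreflect, hf₀, hf_N,
    show √((2 : ℝ) ^ 2 - 1) = √3 by norm_num, nsmul_eq_mul] at hclosed
  push_cast at hclosed
  have hs3 : √3 ^ 2 = 3 := sq_sqrt (by norm_num)
  have hr : 1 - (2 - √3) ^ (2 * N) ≠ 0 := (sub_pos.mpr <|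
    pow_lt_one₀ (by nlinarith [sqrt_nonneg 3]) (by nlinarith [sqrt_nonneg 3]) (by omega)).ne'
  rw [sum_congr rfl fun n _ => hsummand n, ← mul_sum]
  calc 3 * ∑ n ∈ Icc 1 (N - 1), f n
      = 3 / 2 * (2 * N * (1 + (2 - √3) ^ (2 * N)) / (√3 * (1 - (2 - √3) ^ (2 * N))) - 4 / 3) := by
        linarith
    _ = _ := by
        field_simp
        linear_combination 2 * N * ((2 - √3) ^ (2 * N) - 1) * hs3
end

section
/- Let N ≥ 2 and l be integers with 1 ≤ l ≤ N. Then Σ_{n=1}^{N-1} sin(n l π/N) / sin(n π/N) equals N − l if l is odd, and equals 0 if l is even. -/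
/-!
Both parities rest on the telescoping identity
`2 sin y · ∑_{k<m} cos (2ky) = sin ((2m-1)y) + sin y`.
For odd `l = 2m+1` it gives the Dirichlet kernel
`sin (l x) / sin x = 2 ∑_{k≤m} cos (2kx) - 1`; summed over all `n < N` at `x = nπ/N`, every
`k ≥ 1` contributes `0` (again by telescoping, now with `y = kπ/N`), so the total is `N`, and the
term `n = 0` (equal to `l`) is removed. For even `l`, the substitution `n ↦ N - n` changes the
sign of every term, so the sum vanishes.
-/

open Real Finset

theorem Finset.sum_Icc_sub_reflect {M : Type*} [AddCommMonoid M] (f : ℕ → M) (N : ℕ) :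
    ∑ n ∈ Icc 1 (N - 1), f (N - n) = ∑ n ∈ Icc 1 (N - 1), f n :=
  sum_nbij' (N - ·) (N - ·) (fun n hn => by simp only [mem_Icc] at *; omega)
    (fun n hn => by simp only [mem_Icc] at *; omega)
    (fun n hn => by simp only [mem_Icc] at *; omega)
    (fun n hn => by simp only [mem_Icc] at *; omega) (fun _ _ => rfl)

theorem Finset.sum_range_eq_add_sum_Icc {M : Type*} [AddCommMonoid M] (f : ℕ → M) {N : ℕ}
    (hN : 0 < N) : ∑ n ∈ range N, f n = f 0 + ∑ n ∈ Icc 1 (N - 1), f n := by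
  rw [sum_range_eq_add_Ico f hN, ← Ico_add_one_right_eq_Icc, Nat.sub_one_add_one hN.ne']

namespace Real

theorem two_mul_sin_mul_sum_range_cos (y : ℝ) (m : ℕ) :
    2 * sin y * ∑ k ∈ range m, cos (2 * k * y) = sin ((2 * m - 1) * y) + sin y := by
  induction m with
  | zero => simp [neg_mul]
  | succ m ih =>
    have hprev : y - 2 * m * y = -((2 * m - 1) * y) := by ring
    rw [sum_range_succ, mul_add, ih, two_mul_sin_mul_cos, hprev, sin_neg]
    push_cast
    ring_nf

theorem sin_two_mul_add_one_mul (m : ℕ) (x : ℝ) :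
    sin ((2 * m + 1) * x) = sin x * (2 * ∑ k ∈ range (m + 1), cos (2 * k * x) - 1) := by
  have h := two_mul_sin_mul_sum_range_cos x (m + 1)
  rw [Nat.cast_succ, show (2 * ((m : ℝ) + 1) - 1) * x = (2 * m + 1) * x by ring] at h
  linear_combination -h

theorem sin_mul_pi_div_ne_zero {N k : ℕ} (hN : N ≠ 0) (hk : ¬N ∣ k) :
    sin (k * π / N) ≠ 0 := by
  rw [Ne, sin_eq_zero_iff]
  rintro ⟨j, hj⟩
  have hjN : (j * N : ℝ) = k := by field_simp at hj; linarith
  exact hk (Int.natCast_dvd_natCast.mp ⟨j, by rw [mul_comm]; exact_mod_cast hjN.symm⟩)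

theorem sum_range_cos_two_mul_mul_pi_div_eq_zero {N k : ℕ} (hk : ¬N ∣ k) :
    ∑ n ∈ range N, cos (2 * k * (n * π / N)) = 0 := by
  rcases Nat.eq_zero_or_pos N with rfl | hN
  · simp
  set y := k * π / N
  have h := two_mul_sin_mul_sum_range_cos y N
  have hend : sin ((2 * N - 1) * y) = -sin y := by
    have harg : (2 * N - 1) * y = (2 * k : ℕ) * π - y := by
      simp only [Nat.cast_mul, Nat.cast_ofNat, y]
      field_simp
    rw [harg, sin_nat_mul_pi_sub, (even_two_mul k).neg_one_pow, one_mul]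
  rw [hend, neg_add_cancel] at h
  have hswap : ∀ n : ℕ, 2 * k * (n * π / N) = 2 * n * y := fun n => by ring
  simp_rw [hswap]
  exact (mul_eq_zero.mp h).resolve_left
    (mul_ne_zero two_ne_zero (sin_mul_pi_div_ne_zero hN.ne' hk))

theorem sin_nat_mul_pi_sub_div_sin_pi_sub (l : ℕ) (x : ℝ) :
    sin (l * (π - x)) / sin (π - x) = -(-1) ^ l * (sin (l * x) / sin x) := by
  rw [mul_sub, sin_nat_mul_pi_sub, sin_pi_sub]
  ring

end Real

theorem sum_Icc_sin_mul_div_sin_of_even {N l : ℕ} (hl : Even l) :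
    ∑ n ∈ Icc 1 (N - 1), sin (l * (n * π / N)) / sin (n * π / N) = 0 := by
  set f : ℕ → ℝ := fun n => sin (l * (n * π / N)) / sin (n * π / N)
  have hflip : ∀ n ∈ Icc 1 (N - 1), f (N - n) = -f n := by
    intro n hn
    rw [mem_Icc] at hn
    have hN : (N : ℝ) ≠ 0 := by norm_cast; omega
    have harg : ((N - n : ℕ) : ℝ) * π / N = π - n * π / N := by
      rw [Nat.cast_sub (by omega)]
      field_simp
    simp only [f, harg, sin_nat_mul_pi_sub_div_sin_pi_sub, hl.neg_one_pow]
    ring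
  have h := sum_Icc_sub_reflect f N
  rw [sum_congr rfl hflip, sum_neg_distrib] at h
  linarith

theorem sum_Icc_sin_mul_div_sin_of_odd {N l : ℕ} (hl : Odd l) (hlN : l ≤ N) :
    ∑ n ∈ Icc 1 (N - 1), sin (l * (n * π / N)) / sin (n * π / N) = N - l := by
  obtain ⟨m, rfl⟩ := hl
  set D : ℝ → ℝ := fun x => 2 * ∑ k ∈ range (m + 1), cos (2 * k * x) - 1
  have hterm : ∀ n ∈ Icc 1 (N - 1),
      sin ((2 * m + 1 : ℕ) * (n * π / N)) / sin (n * π / N) = D (n * π / N) := by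
    intro n hn
    rw [mem_Icc] at hn
    have hsin := sin_mul_pi_div_ne_zero (N := N) (k := n) (by omega)
      (Nat.not_dvd_of_pos_of_lt (by omega) (by omega))
    push_cast
    rw [sin_two_mul_add_one_mul, mul_div_cancel_left₀ _ hsin]
  have hall : ∑ n ∈ range N, D (n * π / N) = N := by
    simp only [D, sum_sub_distrib, ← mul_sum, sum_const, card_range]
    rw [sum_comm, sum_range_succ', sum_eq_zero fun k hk =>
      sum_range_cos_two_mul_mul_pi_div_eq_zero
        (Nat.not_dvd_of_pos_of_lt k.succ_pos (by rw [mem_range] at hk; omega))]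
    simp only [CharP.cast_eq_zero, mul_zero, zero_mul, cos_zero, sum_const, card_range,
      nsmul_eq_mul, mul_one, zero_add]
    ring
  have hD0 : D 0 = 2 * m + 1 := by
    simp only [mul_zero, cos_zero, sum_const, card_range, nsmul_eq_mul, Nat.cast_add, Nat.cast_one,
      mul_one, D]
    ring
  have hsplit := sum_range_eq_add_sum_Icc (fun n => D (n * π / N)) (by omega : 0 < N)
  simp only [CharP.cast_eq_zero, zero_mul, zero_div, hD0] at hsplit
  rw [sum_congr rfl hterm]
  push_cast
  linarith

theorem sine_ratio_sum_general (N l : ℕ) (hl2 : l ≤ N) :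
    ∑ n ∈ Finset.Icc 1 (N - 1), Real.sin (n * l * Real.pi / N) / Real.sin (n * Real.pi / N)
    = if Odd l then (N : ℝ) - l else 0 := by
  have harg : ∀ n : ℕ, (n * l * π / N : ℝ) = l * (n * π / N) := fun n => by ring
  simp_rw [harg]
  split_ifs with hl
  · exact sum_Icc_sin_mul_div_sin_of_odd hl hl2
  · exact sum_Icc_sin_mul_div_sin_of_even (Nat.not_odd_iff_even.mp hl)

theorem sine_ratio_sum (N l : ℕ) (hN : 2 ≤ N) (hl1 : 1 ≤ l) (hl2 : l ≤ N) :
    ∑ n ∈ Finset.Icc 1 (N - 1), Real.sin (n * l * Real.pi / N) / Real.sin (n * Real.pi / N)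
    = if Odd l then (N : ℝ) - l else 0 :=
  sine_ratio_sum_general N l hl2
end

section
/- Let N ≥ 2 and l be integers with 0 ≤ l ≤ N−1. Then Σ_{n=1}^{N-1} (−1)^n · sin(n l π/N) / sin(n π/N) equals −l if l and N have opposite parity (l odd with N even, or l even with N odd), and equals 0 if l and N have the same parity. -/
open Real Finset

-- odd case: reflection
lemma cos_sum_odd (N k : ℕ) (hN : 2 ≤ N) (hk : Odd k) :
    ∑ n ∈ Finset.Icc 1 (N - 1), Real.cos (n * k * Real.pi / N) = 0 := by
  have h : ∑ n ∈ Finset.Icc 1 (N - 1), Real.cos (n * k * Real.pi / N)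
      = ∑ n ∈ Finset.Icc 1 (N - 1), -Real.cos (n * k * Real.pi / N) := by
    refine Finset.sum_nbij' (fun n => N - n) (fun n => N - n) ?_ ?_ ?_ ?_ ?_
    · intro a ha; simp only [Finset.mem_Icc] at *; omega
    · intro a ha; simp only [Finset.mem_Icc] at *; omega
    · intro a ha; simp only [Finset.mem_Icc] at *; omega
    · intro a ha; simp only [Finset.mem_Icc] at *; omega
    · intro a ha
      simp only [Finset.mem_Icc] at ha
      have hc : ((N - a : ℕ) : ℝ) = (N : ℝ) - a := by
        push_cast [Nat.cast_sub (by omega : a ≤ N)]; ring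
      rw [hc]
      have hN0 : (N : ℝ) ≠ 0 := by positivity
      have harg : ((N : ℝ) - a) * k * Real.pi / N = k * Real.pi - a * k * Real.pi / N := by
        field_simp
      rw [harg, Real.cos_nat_mul_pi_sub]
      rcases hk with ⟨m, hm⟩
      subst hm
      rw [pow_add, pow_mul]
      simp [pow_mul]
  rw [Finset.sum_neg_distrib] at h
  linarith [h]

lemma cos_sum_even (N j : ℕ) (hN : 2 ≤ N) (hj1 : 1 ≤ j) (hj2 : j < N) :
    ∑ n ∈ Finset.Icc 1 (N - 1), Real.cos (n * (2 * j) * Real.pi / N) = -1 := by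
  have hN0 : (N : ℝ) ≠ 0 := by positivity
  set z : ℂ := Complex.exp ((2 * Real.pi * j / N : ℝ) * Complex.I) with hz
  have hzN : z ^ N = 1 := by
    rw [hz, ← Complex.exp_nat_mul]
    have hr : ((N:ℝ) * (2 * Real.pi * j / N)) = (j:ℝ) * (2 * Real.pi) := by
      field_simp
    have : (N : ℂ) * ((2 * Real.pi * j / N : ℝ) * Complex.I) = (j : ℂ) * (2 * Real.pi * Complex.I) := by
      calc (N : ℂ) * ((2 * Real.pi * j / N : ℝ) * Complex.I)
          = (((N:ℝ) * (2 * Real.pi * j / N) : ℝ) : ℂ) * Complex.I := by push_cast; ring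
        _ = (((j:ℝ) * (2 * Real.pi) : ℝ) : ℂ) * Complex.I := by rw [hr]
        _ = (j : ℂ) * (2 * Real.pi * Complex.I) := by push_cast; ring
    rw [this]
    exact Complex.exp_int_mul_two_pi_mul_I j
  have hz1 : z ≠ 1 := by
    rw [hz]
    intro h1
    rw [Complex.exp_eq_one_iff] at h1
    obtain ⟨n, hn⟩ := h1
    have h2 : ((2 * Real.pi * j / N : ℝ) : ℂ) = (((n : ℝ) * (2 * Real.pi) : ℝ) : ℂ) :=
      mul_right_cancel₀ Complex.I_ne_zero (by rw [hn]; push_cast; ring)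
    have hr : (2 * Real.pi * j / N : ℝ) = (n : ℝ) * (2 * Real.pi) := Complex.ofReal_inj.mp h2
    have hpi : (0:ℝ) < Real.pi := Real.pi_pos
    have hNR : (0:ℝ) < (N:ℝ) := by positivity
    have hjn : (j : ℝ) = (n : ℝ) * N := by
      field_simp at hr
      nlinarith [hr]
    have hZ : (j : ℤ) = n * N := by exact_mod_cast hjn
    have hj1Z : (1:ℤ) ≤ (j:ℤ) := by exact_mod_cast hj1
    have hj2Z : (j:ℤ) < (N:ℤ) := by exact_mod_cast hj2
    have hNZ : (2:ℤ) ≤ (N:ℤ) := by exact_mod_cast hN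
    rcases le_or_gt n 0 with h | h
    · have := mul_nonpos_of_nonpos_of_nonneg h (by linarith : (0:ℤ) ≤ (N:ℤ))
      linarith
    · have h1 : (1:ℤ) ≤ n := h
      have := mul_le_mul_of_nonneg_right h1 (by linarith : (0:ℤ) ≤ (N:ℤ))
      linarith
  have hsum : ∑ n ∈ Finset.range N, z ^ n = 0 := by
    rw [geom_sum_eq hz1, hzN]; simp
  have hre : ∀ n : ℕ, (z ^ n).re = Real.cos (n * (2 * j) * Real.pi / N) := by
    intro n
    rw [hz, ← Complex.exp_nat_mul]
    have : (n : ℂ) * ((2 * Real.pi * j / N : ℝ) * Complex.I)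
        = ((n * (2 * j) * Real.pi / N : ℝ) : ℂ) * Complex.I := by
      push_cast; ring
    rw [this, Complex.exp_ofReal_mul_I_re]
  have hrange : Finset.range N = insert 0 (Finset.Icc 1 (N - 1)) := by
    ext x; simp only [Finset.mem_range, Finset.mem_insert, Finset.mem_Icc]; omega
  have h0 : (0:ℝ) = ∑ n ∈ Finset.range N, Real.cos (n * (2 * j) * Real.pi / N) := by
    have := congrArg Complex.re hsum
    rw [Complex.re_sum] at this
    simp only [hre] at this
    simpa using this.symm
  rw [hrange, Finset.sum_insert (by simp)] at h0
  simp only [Nat.cast_zero, zero_mul, zero_div, Real.cos_zero] at h0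
  linarith

lemma sin_ne_aux (N n : ℕ) (hn : n ∈ Finset.Icc 1 (N-1)) (hN : 2 ≤ N) :
    Real.sin (n * Real.pi / N) ≠ 0 := by
  simp only [Finset.mem_Icc] at hn
  have hN0 : (0:ℝ) < N := by positivity
  apply ne_of_gt
  apply Real.sin_pos_of_pos_of_lt_pi
  · have : (0:ℝ) < (n:ℝ) := by exact_mod_cast hn.1
    positivity
  · rw [div_lt_iff₀ hN0]
    have : (n:ℝ) < N := by exact_mod_cast (by omega : n < N)
    nlinarith [Real.pi_pos]

theorem alternating_sine_ratio_sum (N l : ℕ) (hN : 2 ≤ N) (hl : l ≤ N - 1) :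
    ∑ n ∈ Finset.Icc 1 (N - 1),
      (-1 : ℝ) ^ n * Real.sin (n * l * Real.pi / N) / Real.sin (n * Real.pi / N)
    = if Odd (l + N) then -(l : ℝ) else 0 := by
  induction l using Nat.strong_induction_on with
  | _ l ih =>
  match l, hl with
  | 0, _ =>
    simp only [Nat.cast_zero, mul_zero, zero_mul, zero_div, Real.sin_zero, mul_zero, zero_div]
    split_ifs <;> simp
  | 1, _ =>
    have hterm : ∀ n ∈ Finset.Icc 1 (N-1),
        (-1 : ℝ) ^ n * Real.sin (n * (1:ℕ) * Real.pi / N) / Real.sin (n * Real.pi / N)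
        = (-1:ℝ)^n := by
      intro n hn
      rw [Nat.cast_one, mul_one, mul_div_assoc, div_self (sin_ne_aux N n hn hN), mul_one]
    rw [Finset.sum_congr rfl hterm]
    have hrange : Finset.range N = insert 0 (Finset.Icc 1 (N - 1)) := by
      ext x; simp only [Finset.mem_range, Finset.mem_insert, Finset.mem_Icc]; omega
    have h1 : ∑ n ∈ Finset.range N, (-1:ℝ)^n = 1 + ∑ n ∈ Finset.Icc 1 (N-1), (-1:ℝ)^n := by
      rw [hrange, Finset.sum_insert (by simp)]; norm_num
    rw [neg_one_geom_sum] at h1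
    rcases Nat.even_or_odd N with he | ho
    · have : Odd (1 + N) := by rcases he with ⟨m, hm⟩; exact ⟨m, by omega⟩
      rw [if_pos this]
      rw [if_pos he] at h1
      push_cast
      linarith
    · have : ¬ Odd (1 + N) := by rcases ho with ⟨m, hm⟩; simp [Nat.odd_add]; exact ⟨m, by omega⟩
      rw [if_neg this]
      rw [if_neg (Nat.not_even_iff_odd.mpr ho)] at h1
      linarith
  | (m+2), hl2 =>
    have hm : m ≤ N - 1 := by omega
    have ihm := ih m (by omega) hm
    have hterm : ∀ n ∈ Finset.Icc 1 (N-1),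
        (-1 : ℝ) ^ n * Real.sin (n * (m+2:ℕ) * Real.pi / N) / Real.sin (n * Real.pi / N)
        = (-1 : ℝ) ^ n * Real.sin (n * (m:ℕ) * Real.pi / N) / Real.sin (n * Real.pi / N)
          + 2 * Real.cos (n * (N+m+1:ℕ) * Real.pi / N) := by
      intro n hn
      have hs := sin_ne_aux N n hn hN
      have hN0 : (N:ℝ) ≠ 0 := by positivity
      have hdiff : Real.sin ((n:ℝ) * (m+2:ℕ) * Real.pi / N) - Real.sin ((n:ℝ) * (m:ℕ) * Real.pi / N)
          = 2 * Real.sin ((n:ℝ) * Real.pi / N) * Real.cos ((n:ℝ) * (m+1) * Real.pi / N) := by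
        rw [Real.sin_sub_sin]
        congr 2
        · push_cast; field_simp; ring
        · push_cast; field_simp; ring
      have hcos : Real.cos ((n:ℝ) * (N+m+1:ℕ) * Real.pi / N)
          = (-1:ℝ)^n * Real.cos ((n:ℝ) * (m+1) * Real.pi / N) := by
        have harg : (n:ℝ) * (N+m+1:ℕ) * Real.pi / N = (n:ℝ) * Real.pi + (n:ℝ) * (m+1) * Real.pi / N := by
          push_cast; field_simp; ring
        have hc : Real.cos ((n:ℝ) * Real.pi) = (-1:ℝ)^n := by
          simpa using Real.cos_nat_mul_pi_sub 0 n
        rw [harg, Real.cos_add, hc, Real.sin_nat_mul_pi]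
        ring
      calc (-1 : ℝ) ^ n * Real.sin ((n:ℝ) * (m+2:ℕ) * Real.pi / N) / Real.sin ((n:ℝ) * Real.pi / N)
          = (-1 : ℝ) ^ n * Real.sin ((n:ℝ) * (m:ℕ) * Real.pi / N) / Real.sin ((n:ℝ) * Real.pi / N)
            + (-1:ℝ)^n * ((Real.sin ((n:ℝ) * (m+2:ℕ) * Real.pi / N) - Real.sin ((n:ℝ) * (m:ℕ) * Real.pi / N)) / Real.sin ((n:ℝ) * Real.pi / N)) := by
            ring
        _ = (-1 : ℝ) ^ n * Real.sin ((n:ℝ) * (m:ℕ) * Real.pi / N) / Real.sin ((n:ℝ) * Real.pi / N)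
            + (-1:ℝ)^n * (2 * Real.sin ((n:ℝ) * Real.pi / N) * Real.cos ((n:ℝ) * (m+1) * Real.pi / N) / Real.sin ((n:ℝ) * Real.pi / N)) := by
            rw [hdiff]
        _ = (-1 : ℝ) ^ n * Real.sin ((n:ℝ) * (m:ℕ) * Real.pi / N) / Real.sin ((n:ℝ) * Real.pi / N)
            + (-1:ℝ)^n * (2 * Real.cos ((n:ℝ) * (m+1) * Real.pi / N)) := by
            congr 1
            congr 1
            field_simp
        _ = (-1 : ℝ) ^ n * Real.sin ((n:ℝ) * (m:ℕ) * Real.pi / N) / Real.sin ((n:ℝ) * Real.pi / N)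
            + 2 * Real.cos ((n:ℝ) * (N+m+1:ℕ) * Real.pi / N) := by
            rw [hcos]; ring
    rw [Finset.sum_congr rfl hterm, Finset.sum_add_distrib, ihm, ← Finset.mul_sum]
    rcases Nat.even_or_odd (m + N) with he | ho
    · -- same parity: cos sum is 0 (odd multiple)
      have hodd : Odd (N + m + 1) := by
        rcases he with ⟨p, hp⟩; exact ⟨p, by omega⟩
      rw [cos_sum_odd N (N+m+1) hN hodd]
      have h1 : ¬ Odd (m + N) := Nat.not_odd_iff_even.mpr he
      have h2 : ¬ Odd (m + 2 + N) := by
        intro h; exact h1 (by rcases h with ⟨p, hp⟩; exact ⟨p - 1, by omega⟩)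
      rw [if_neg h1, if_neg h2]
      ring
    · -- opposite parity: cos sum is -1
      obtain ⟨p, hp⟩ := ho
      have hj : N + m + 1 = 2 * (p + 1) := by omega
      have hj2 : p + 1 < N := by omega
      have hce := cos_sum_even N (p+1) hN (by omega) hj2
      push_cast at hce
      rw [hj]
      push_cast
      rw [hce]
      have h1 : Odd (m + N) := ⟨p, by omega⟩
      have h2 : Odd (m + 2 + N) := ⟨p + 1, by omega⟩
      rw [if_pos h1, if_pos h2]
      push_cast
      ring
end

section
/- Let N ≥ 3 be an odd integer and l an integer with 1 ≤ l ≤ (N+1)/2. Then Σ_{n=1}^{N-1} ( sin(n(2l−1)π/N) / sin(nπ/N) ) · ( sin(2n(2l−1)π/N) / sin(2nπ/N) ) = −(1/2)(3l−2)(3l−3) + (1/2)(l−1)(l−2) − l + (1/2)(1−(−1)^l) + ((N−1)/2)·( 2l−1−(−1)^l ) + ε, where ε = N·( 3l−2−N + (1/2)(1−(−1)^{l−N}) ) if 3l−2 > N, and ε = 0 otherwise. -/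
/-!
For `sin θ ≠ 0`, `sin ((2l-1)θ) / sin θ = ∑_{|a|<l} e^{2iaθ}`. For `0 < n < N` with `N` odd neither
`sin (nπ/N)` nor `sin (2nπ/N)` vanishes, so the `n`-th summand is `∑_{|a|,|b|<l} ω^{n(a+2b)}` with
`ω = e^{2πi/N}`. At `n = 0` this expression is `(2l-1)²`, and summing it over all residues `n` by
orthogonality of roots of unity gives `N · #{(a, b) : N ∣ a + 2b} - (2l-1)²`. Since
`|a + 2b| ≤ 3(l-1) < 2N`, only `a + 2b ∈ {0, N, -N}` occur, and counting these solutions separately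
for each parity of `l` yields the closed form.
-/

open Real Finset

namespace Complex

theorem sin_odd_mul_eq_sin_mul_sum_exp (l : ℕ) (hl : 1 ≤ l) (z : ℂ) :
    sin ((2 * l - 1) * z) = sin z * ∑ a ∈ Icc (1 - (l : ℤ)) (l - 1), exp (2 * a * z * I) := by
  induction l, hl using Nat.le_induction with
  | base => norm_num
  | succ l hl ih =>
    have hIcc : Icc (1 - ((l + 1 : ℕ) : ℤ)) ((l + 1 : ℕ) - 1) =
        insert (-(l : ℤ)) (insert (l : ℤ) (Icc (1 - (l : ℤ)) (l - 1))) := by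
      ext a
      simp only [mem_Icc, mem_insert]
      omega
    have hsin : sin ((2 * ((l + 1 : ℕ) : ℂ) - 1) * z) - sin ((2 * l - 1) * z) =
        sin z * (exp (2 * (-(l : ℤ) : ℤ) * z * I) + exp (2 * (l : ℤ) * z * I)) := by
      rw [Complex.sin_sub_sin, Complex.cos]
      push_cast
      ring_nf
    rw [hIcc, sum_insert (by simp; omega), sum_insert (by simp), ← add_assoc, mul_add, ← ih,
      ← hsin]
    ring

theorem sin_ratio_mul_sin_ratio_eq_sum_exp (l : ℕ) (hl : 1 ≤ l) {z : ℂ}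
    (h₁ : sin z ≠ 0) (h₂ : sin (2 * z) ≠ 0) :
    sin ((2 * l - 1) * z) / sin z * (sin ((2 * l - 1) * (2 * z)) / sin (2 * z)) =
      ∑ p ∈ Icc (1 - (l : ℤ)) (l - 1) ×ˢ Icc (1 - (l : ℤ)) (l - 1),
        exp (2 * (p.1 + 2 * p.2 : ℤ) * z * I) := by
  rw [sin_odd_mul_eq_sin_mul_sum_exp l hl, sin_odd_mul_eq_sin_mul_sum_exp l hl,
    mul_div_cancel_left₀ _ h₁, mul_div_cancel_left₀ _ h₂, sum_mul_sum, sum_product]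
  refine sum_congr rfl fun a _ ↦ sum_congr rfl fun b _ ↦ ?_
  rw [← Complex.exp_add]
  push_cast
  ring_nf

end Complex

theorem IsPrimitiveRoot.sum_range_zpow_mul {K : Type*} [Field K] {ζ : K} {N : ℕ}
    (hζ : IsPrimitiveRoot ζ N) (c : ℤ) :
    ∑ n ∈ range N, ζ ^ ((n : ℤ) * c) = if (N : ℤ) ∣ c then (N : K) else 0 := by
  simp_rw [mul_comm _ c, zpow_mul, zpow_natCast]
  split_ifs with h
  · simp [(hζ.zpow_eq_one_iff_dvd c).2 h]
  · rw [geom_sum_eq ((hζ.zpow_eq_one_iff_dvd c).not.2 h), ← zpow_natCast, ← zpow_mul, mul_comm,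
      zpow_mul, zpow_natCast, hζ.pow_eq_one, one_zpow, sub_self, zero_div]

theorem Real.sin_int_mul_pi_div_ne_zero {N : ℕ} (hN : N ≠ 0) {k : ℤ} (hk : ¬(N : ℤ) ∣ k) :
    Real.sin (k * π / N) ≠ 0 := by
  rw [Ne, Real.sin_eq_zero_iff]
  rintro ⟨m, hm⟩
  refine hk ⟨m, ?_⟩
  field_simp at hm
  rw [mul_comm]
  exact_mod_cast hm.symm

theorem sin_ratio_mul_sin_ratio_eq_sum_zpow {N : ℕ} (hN : N ≠ 0) (l : ℕ) (hl : 1 ≤ l) {n : ℕ}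
    (h₁ : ¬(N : ℤ) ∣ n) (h₂ : ¬(N : ℤ) ∣ 2 * n) :
    (((Real.sin (n * (2 * l - 1 : ℝ) * π / N) / Real.sin (n * π / N)) *
        (Real.sin (2 * n * (2 * l - 1 : ℝ) * π / N) / Real.sin (2 * n * π / N)) : ℝ) : ℂ) =
      ∑ p ∈ Icc (1 - (l : ℤ)) (l - 1) ×ˢ Icc (1 - (l : ℤ)) (l - 1),
        Complex.exp (2 * π * Complex.I / N) ^ ((n : ℤ) * (p.1 + 2 * p.2)) := by
  have key := Complex.sin_ratio_mul_sin_ratio_eq_sum_exp l hl (z := n * π / N)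
    (by exact_mod_cast Real.sin_int_mul_pi_div_ne_zero hN h₁)
    (by rw [← mul_div_assoc, ← mul_assoc]; exact_mod_cast Real.sin_int_mul_pi_div_ne_zero hN h₂)
  push_cast
  convert key using 3 with p
  · congr 1; ring
  · congr 1; ring
  · congr 1; ring
  · rw [← Complex.exp_int_mul]
    congr 1
    push_cast
    ring

theorem sum_sin_ratio_mul_sin_ratio_eq_card {N : ℕ} (hN : Odd N) (l : ℕ) (hl : 1 ≤ l) :
    ∑ n ∈ Icc 1 (N - 1),
      (Real.sin (n * (2 * l - 1 : ℝ) * π / N) / Real.sin (n * π / N)) *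
        (Real.sin (2 * n * (2 * l - 1 : ℝ) * π / N) / Real.sin (2 * n * π / N)) =
      N * #{p ∈ Icc (1 - (l : ℤ)) (l - 1) ×ˢ Icc (1 - (l : ℤ)) (l - 1) | (N : ℤ) ∣ p.1 + 2 * p.2}
        - (2 * l - 1) ^ 2 := by
  set B := Icc (1 - (l : ℤ)) (l - 1) ×ˢ Icc (1 - (l : ℤ)) (l - 1)
  have hN0 : N ≠ 0 := hN.pos.ne'
  set g : ℕ → ℂ := fun n ↦ ∑ p ∈ B, Complex.exp (2 * π * Complex.I / N) ^ ((n : ℤ) * (p.1 + 2 * p.2))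
  have hterm : ∀ n ∈ Icc 1 (N - 1),
      (((Real.sin (n * (2 * l - 1 : ℝ) * π / N) / Real.sin (n * π / N)) *
        (Real.sin (2 * n * (2 * l - 1 : ℝ) * π / N) / Real.sin (2 * n * π / N)) : ℝ) : ℂ) =
          g n := by
    intro n hn
    rw [mem_Icc] at hn
    refine sin_ratio_mul_sin_ratio_eq_sum_zpow hN0 l hl (fun h ↦ ?_) fun h ↦ ?_
    · have := Int.le_of_dvd (by omega) h
      omega
    · have h' : N ∣ 2 * n := by exact_mod_cast h
      have := Nat.le_of_dvd (by omega) (hN.coprime_two_right.dvd_of_dvd_mul_left h')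
      omega
  have hg0 : g 0 = (2 * l - 1) ^ 2 := by
    have hcard : ((l : ℤ) - (1 - l)).toNat = 2 * l - 1 := by omega
    simp [g, B, hcard, ← sq, Nat.cast_sub (show 1 ≤ 2 * l by omega)]
  have hsum : ∑ n ∈ range N, g n = N * #{p ∈ B | (N : ℤ) ∣ p.1 + 2 * p.2} := by
    rw [sum_comm, sum_congr rfl fun p _ ↦ (Complex.isPrimitiveRoot_exp N hN0).sum_range_zpow_mul _,
      sum_ite, sum_const_zero, add_zero, sum_const, nsmul_eq_mul, mul_comm]
  have hrange : range N = insert 0 (Icc 1 (N - 1)) := by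
    ext n
    simp only [mem_range, mem_insert, mem_Icc]
    omega
  apply Complex.ofReal_injective
  rw [Complex.ofReal_sum, sum_congr rfl hterm]
  push_cast
  rw [← hsum, hrange, sum_insert (by simp), hg0]
  ring

theorem Int.dvd_iff_eq_zero_or_eq_or_eq_neg {N c : ℤ} (hN : 0 < N) (hc : |c| < 2 * N) :
    N ∣ c ↔ c = 0 ∨ c = N ∨ c = -N := by
  constructor
  · rintro ⟨d, rfl⟩
    rw [abs_mul, abs_of_pos hN] at hc
    obtain ⟨hd₁, hd₂⟩ := abs_lt.1 (lt_of_mul_lt_mul_left (by linarith) hN.le : |d| < 2)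
    interval_cases d <;> simp
  · rintro (rfl | rfl | rfl) <;> simp

theorem card_filter_dvd_eq_of_abs_lt {α : Type*} [DecidableEq α] (s : Finset α) (f : α → ℤ)
    {N : ℤ} (hN : 0 < N) (hf : ∀ x ∈ s, |f x| < 2 * N) :
    #{x ∈ s | N ∣ f x} = #{x ∈ s | f x = 0} + #{x ∈ s | f x = N} + #{x ∈ s | f x = -N} := by
  rw [filter_congr fun x hx ↦ Int.dvd_iff_eq_zero_or_eq_or_eq_neg hN (hf x hx), filter_or,
    filter_or, card_union_of_disjoint, card_union_of_disjoint, add_assoc]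
  all_goals
    refine disjoint_left.2 fun x hx₁ hx₂ ↦ ?_
    simp only [mem_union, mem_filter] at hx₁ hx₂
    omega

noncomputable def reprCount (l : ℕ) (c : ℤ) : ℕ :=
  #{p ∈ Icc (1 - (l : ℤ)) (l - 1) ×ˢ Icc (1 - (l : ℤ)) (l - 1) | p.1 + 2 * p.2 = c}

theorem reprCount_eq_card (l : ℕ) (c : ℤ) :
    reprCount l c = #{b ∈ Icc (1 - (l : ℤ)) (l - 1) | c - 2 * b ∈ Icc (1 - (l : ℤ)) (l - 1)} :=
  card_nbij' Prod.snd (fun b ↦ (c - 2 * b, b)) (fun p hp ↦ by simp at hp ⊢; omega)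
    (fun b hb ↦ by simp at hb ⊢; omega) (fun p hp ↦ Prod.ext (by simp at hp ⊢; omega) rfl)
    fun _ _ ↦ rfl

theorem reprCount_neg (l : ℕ) (c : ℤ) : reprCount l (-c) = reprCount l c := by
  rw [reprCount_eq_card, reprCount_eq_card]
  exact card_nbij' Neg.neg Neg.neg (fun b hb ↦ by simp at hb ⊢; omega)
    (fun b hb ↦ by simp at hb ⊢; omega) (fun b _ ↦ neg_neg b) fun b _ ↦ neg_neg b

theorem reprCount_eq_toNat (l : ℕ) (c : ℤ) :
    reprCount l c =
      (min ((l : ℤ) - 1) ((c + l - 1) / 2) + 1 - max (1 - (l : ℤ)) ((c - l + 2) / 2)).toNat := by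
  rw [reprCount_eq_card, ← Int.card_Icc]
  congr 1
  ext b
  simp only [mem_filter, mem_Icc]
  omega

theorem two_mul_reprCount_zero {l : ℕ} (hl : 1 ≤ l) :
    (2 * reprCount l 0 : ℝ) = 2 * l - 1 - (-1) ^ l := by
  have key : (2 * reprCount l 0 : ℤ) = 2 * l - 1 - (-1) ^ l := by
    rw [reprCount_eq_toNat]
    obtain ⟨t, rfl | rfl⟩ := Nat.even_or_odd' l
    · rw [Even.neg_one_pow ⟨t, two_mul t⟩]; push_cast; omega
    · rw [Odd.neg_one_pow ⟨t, rfl⟩]; push_cast; omega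
  exact_mod_cast key

theorem two_mul_reprCount_of_odd {N l : ℕ} (hN : Odd N) (hl : l ≤ N + 1) :
    (2 * reprCount l N : ℝ) = if 3 * l - 2 > N then
      3 * (l : ℝ) - 2 - N + (1 / 2) * (1 - (-1 : ℝ) ^ ((l : ℤ) - (N : ℤ))) else 0 := by
  have key : (4 * reprCount l N : ℤ) =
      if 3 * l - 2 > N then 2 * (3 * (l : ℤ) - 2 - N) + 1 + (-1) ^ l else 0 := by
    obtain ⟨s, rfl⟩ := hN
    rw [reprCount_eq_toNat]
    obtain ⟨t, rfl | rfl⟩ := Nat.even_or_odd' l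
    · rw [Even.neg_one_pow ⟨t, two_mul t⟩]; split_ifs <;> push_cast <;> omega
    · rw [Odd.neg_one_pow ⟨t, rfl⟩]; split_ifs <;> push_cast <;> omega
  have hsign : (-1 : ℝ) ^ ((l : ℤ) - N) = -(-1) ^ l := by
    rw [zpow_sub₀ (by norm_num), zpow_natCast, zpow_natCast, hN.neg_one_pow, div_neg, div_one]
  have hkey := congrArg (Int.cast : ℤ → ℝ) key
  push_cast at hkey
  rw [hsign]
  split_ifs at hkey ⊢ <;> linarith

theorem card_filter_dvd_eq_reprCount {N l : ℕ} (hN : 0 < N) (hl : 3 * l < 2 * N + 3) :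
    #{p ∈ Icc (1 - (l : ℤ)) (l - 1) ×ˢ Icc (1 - (l : ℤ)) (l - 1) | (N : ℤ) ∣ p.1 + 2 * p.2} =
      reprCount l 0 + 2 * reprCount l N := by
  rw [card_filter_dvd_eq_of_abs_lt _ (fun p : ℤ × ℤ ↦ p.1 + 2 * p.2) (by exact_mod_cast hN)
    fun p hp ↦ by simp only [mem_product, mem_Icc] at hp; rw [abs_lt]; omega]
  change reprCount l 0 + reprCount l N + reprCount l (-N) = _
  rw [reprCount_neg]
  ring

theorem F1_sum_closed_form_general (N l : ℕ) (hNodd : Odd N)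
    (hl1 : 1 ≤ l) (hl2 : l ≤ (N + 1) / 2) :
    ∑ n ∈ Finset.Icc 1 (N - 1),
      (Real.sin (n * (2 * l - 1 : ℝ) * Real.pi / N) / Real.sin (n * Real.pi / N)) *
        (Real.sin (2 * n * (2 * l - 1 : ℝ) * Real.pi / N) / Real.sin (2 * n * Real.pi / N))
    = -(1 / 2) * (3 * (l : ℝ) - 2) * (3 * (l : ℝ) - 3)
      + (1 / 2) * ((l : ℝ) - 1) * ((l : ℝ) - 2)
      - l
      + (1 / 2) * (1 - (-1 : ℝ) ^ l)
      + (((N : ℝ) - 1) / 2) * (2 * (l : ℝ) - 1 - (-1 : ℝ) ^ l)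
      + (if 3 * l - 2 > N then
          (N : ℝ) * (3 * (l : ℝ) - 2 - N + (1 / 2) * (1 - (-1 : ℝ) ^ ((l : ℤ) - (N : ℤ))))
        else 0) := by
  rw [sum_sin_ratio_mul_sin_ratio_eq_card hNodd l hl1,
    card_filter_dvd_eq_reprCount hNodd.pos (by omega)]
  have h₀ := two_mul_reprCount_zero hl1
  have h₁ := two_mul_reprCount_of_odd hNodd (by omega : l ≤ N + 1)
  push_cast
  split_ifs at h₁ ⊢ <;> linear_combination (N / 2 : ℝ) * h₀ + N * h₁

theorem F1_sum_closed_form (N l : ℕ) (hN : 3 ≤ N) (hNodd : Odd N)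
    (hl1 : 1 ≤ l) (hl2 : l ≤ (N + 1) / 2) :
    ∑ n ∈ Finset.Icc 1 (N - 1),
      (Real.sin (n * (2 * l - 1 : ℝ) * Real.pi / N) / Real.sin (n * Real.pi / N)) *
        (Real.sin (2 * n * (2 * l - 1 : ℝ) * Real.pi / N) / Real.sin (2 * n * Real.pi / N))
    = -(1 / 2) * (3 * (l : ℝ) - 2) * (3 * (l : ℝ) - 3)
      + (1 / 2) * ((l : ℝ) - 1) * ((l : ℝ) - 2)
      - l
      + (1 / 2) * (1 - (-1 : ℝ) ^ l)
      + (((N : ℝ) - 1) / 2) * (2 * (l : ℝ) - 1 - (-1 : ℝ) ^ l)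
      + (if 3 * l - 2 > N then
          (N : ℝ) * (3 * (l : ℝ) - 2 - N + (1 / 2) * (1 - (-1 : ℝ) ^ ((l : ℤ) - (N : ℤ))))
        else 0) :=
  F1_sum_closed_form_general N l hNodd hl1 hl2
end
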